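/- arXiv:math/0307125 — 7 statements merged into one kernel-verified Lean document; each statement's English description precedes it below -/
import Mathlib

section
/- For any integers a < b and any polynomial f, the weighted sum (1/2)f(a) + f(a+1) + ... + f(b-1) + (1/2)f(b) equals the result of applying the operators L(∂/∂h₁)L(∂/∂h₂) to ∫_{a-h₁}^{b+h₂} f(x) dx and evaluating at h₁ = h₂ = 0, where L(S) = (S/2)/tanh(S/2) = 1 + Σ_{k≥1} b_{2k} S^{2k}/(2k)! with b_{2k} the Bernoulli numbers (the operator application reduces to a finite sum since the integral is a polynomial in h₁, h₂). -/
/-!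
Let `F` be an antiderivative of `f`. The integral is `F (b + h₂) - F (a - h₁)`, so all mixed
derivatives vanish and, `L` being even, the right-hand side is `E b - E a` for
`E x = ∑ⱼ Lcoeff j • F⁽ʲ⁾ x`. Since `Lcoeff j = (Bⱼ + B'ⱼ) / (2 j!)`, the recurrences
`∑_{j<p} C(p,j) Bⱼ = [p = 1]` and `∑_{j<p} C(p,j) B'ⱼ = p`, tested on monomials, give
`E (x + 1) - E x = (f x + f (x + 1)) / 2`, and summing over `x ∈ [a, b)` yields the weighted sum.
-/

open scoped BigOperators
open intervalIntegral

/-- The Taylor coefficients of `L(S) = (S/2)/tanh(S/2)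
    = 1 + ∑_{k≥1} b_{2k} S^{2k}/(2k)!`. -/
noncomputable def Lcoeff (j : ℕ) : ℝ :=
  if j = 0 then 1 else if Odd j then 0 else ((bernoulli j : ℚ) : ℝ) / (Nat.factorial j)

open Polynomial Finset

section Antiderivative

variable {K : Type*} [Field K]

noncomputable def antiderivative (f : K[X]) : K[X] :=
  f.sum fun n c => C (c / (n + 1)) * X ^ (n + 1)

theorem derivative_antiderivative [CharZero K] (f : K[X]) :
    derivative (antiderivative f) = f := by
  conv_rhs => rw [← f.sum_C_mul_X_pow_eq]
  rw [antiderivative, Polynomial.sum, Polynomial.sum, map_sum]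
  refine sum_congr rfl fun n _ => ?_
  rw [derivative_C_mul_X_pow, Nat.add_sub_cancel]
  congr 1
  push_cast
  field_simp

theorem natDegree_antiderivative_le (f : K[X]) :
    (antiderivative f).natDegree ≤ f.natDegree + 1 :=
  natDegree_sum_le_of_forall_le _ _ fun n hn =>
    (natDegree_C_mul_X_pow_le _ _).trans (Nat.add_le_add_right (le_natDegree_of_mem_supp n hn) 1)

end Antiderivative

section Derivative

variable {R : Type*} [CommSemiring R]

theorem derivative_taylor (r : R) (p : R[X]) :
    derivative (taylor r p) = taylor r (derivative p) := by
  simp [taylor_apply, derivative_comp]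

theorem iterate_derivative_taylor (r : R) (p : R[X]) (j : ℕ) :
    derivative^[j] (taylor r p) = taylor r (derivative^[j] p) :=
  ((Function.Commute.iterate_right (f := ⇑(taylor r)) (g := ⇑derivative)
    (fun p => (derivative_taylor r p).symm) j) p).symm

theorem derivative_eval_one_eq_sum (G : R[X]) {N : ℕ} (hG : G.natDegree ≤ N) :
    (derivative G).eval 1 = ∑ p ∈ range (N + 1), G.coeff p * p := by
  rw [derivative_eval, sum_over_range' _ (fun _ => by simp) _ (Nat.lt_succ_of_le hG)]
  simp

end Derivative

section DifferenceOperator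

variable {R : Type*} [CommRing R]

theorem iterate_derivative_X_pow_eval_one_sub_eval_zero (p j : ℕ) :
    (derivative^[j] (X ^ p : R[X])).eval 1 - (derivative^[j] (X ^ p : R[X])).eval 0
      = if j < p then (p.descFactorial j : R) else 0 := by
  rw [iterate_derivative_X_pow_eq_natCast_mul]
  split_ifs with h
  · simp [zero_pow (Nat.sub_ne_zero_of_lt h)]
  · rcases (not_lt.mp h).eq_or_lt with rfl | h'
    · simp
    · simp [Nat.descFactorial_eq_zero_iff_lt.mpr h']

theorem sum_mul_iterate_derivative_eval_one_sub_eval_zero (c : ℕ → R) (G : R[X]) {N : ℕ}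
    (hG : G.natDegree ≤ N) :
    ∑ j ∈ range N, c j * ((derivative^[j] G).eval 1 - (derivative^[j] G).eval 0)
      = ∑ p ∈ range (N + 1), G.coeff p * ∑ j ∈ range p, (p.descFactorial j : R) * c j := by
  have hmonomial : ∀ p ∈ range (N + 1), ∑ j ∈ range N, c j *
      ((derivative^[j] (C (G.coeff p) * X ^ p)).eval 1
        - (derivative^[j] (C (G.coeff p) * X ^ p)).eval 0)
      = G.coeff p * ∑ j ∈ range p, (p.descFactorial j : R) * c j := by
    intro p hp
    have hfilter : (range N).filter (· < p) = range p := by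
      ext j
      simp only [mem_filter, mem_range] at hp ⊢
      omega
    simp only [iterate_derivative_C_mul, eval_C_mul, ← mul_sub,
      iterate_derivative_X_pow_eval_one_sub_eval_zero, mul_ite, mul_zero, ← sum_filter, hfilter,
      mul_sum]
    exact sum_congr rfl fun j _ => by ring
  conv_lhs => rw [G.as_sum_range_C_mul_X_pow' (Nat.lt_succ_of_le hG)]
  simp only [iterate_derivative_sum, eval_finsetSum, ← sum_sub_distrib, mul_sum]
  rw [sum_comm]
  exact sum_congr rfl fun p hp => (hmonomial p hp).trans (mul_sum ..)

end DifferenceOperator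

theorem Lcoeff_eq_bernoulli_add_bernoulli' (j : ℕ) :
    Lcoeff j = ((_root_.bernoulli j : ℝ) + (bernoulli' j : ℝ)) / (2 * j.factorial) := by
  rcases eq_or_ne j 0 with rfl | h0
  · simp [Lcoeff]
  rcases eq_or_ne j 1 with rfl | h1
  · norm_num [Lcoeff, _root_.bernoulli_one, bernoulli'_one]
  by_cases hodd : Odd j
  · simp [Lcoeff, h0, hodd, bernoulli_eq_bernoulli'_of_ne_one h1,
      bernoulli'_eq_zero_of_odd hodd (by omega)]
  · simp only [Lcoeff, h0, hodd, if_false, bernoulli_eq_bernoulli'_of_ne_one h1]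
    field_simp
    ring

theorem Lcoeff_mul_neg_one_pow (j : ℕ) : Lcoeff j * (-1) ^ j = Lcoeff j := by
  rcases Nat.even_or_odd j with hj | hj
  · rw [hj.neg_one_pow, mul_one]
  · simp [Lcoeff, hj, hj.pos.ne']

theorem sum_range_descFactorial_mul_Lcoeff (p : ℕ) :
    ∑ j ∈ range p, (p.descFactorial j : ℝ) * Lcoeff j = ((if p = 1 then 1 else 0) + p) / 2 := by
  have hterm : ∀ j, (p.descFactorial j : ℝ) * Lcoeff j
      = (((p.choose j * _root_.bernoulli j : ℚ) : ℝ)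
        + ((p.choose j * bernoulli' j : ℚ) : ℝ)) / 2 := by
    intro j
    rw [Lcoeff_eq_bernoulli_add_bernoulli', Nat.descFactorial_eq_factorial_mul_choose]
    push_cast
    field_simp
  simp only [hterm, ← sum_div, sum_add_distrib, ← Rat.cast_sum, _root_.sum_bernoulli,
    sum_bernoulli']
  split_ifs <;> norm_num

theorem sum_Lcoeff_mul_iterate_derivative_eval_add_one_sub (G : ℝ[X]) {N : ℕ}
    (hG : G.natDegree ≤ N) (x : ℝ) :
    ∑ j ∈ range N, Lcoeff j * (derivative^[j] G).eval (x + 1)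
        - ∑ j ∈ range N, Lcoeff j * (derivative^[j] G).eval x
      = ((derivative G).eval x + (derivative G).eval (x + 1)) / 2 := by
  have hzero : ∀ P : ℝ[X], P.natDegree ≤ N →
      ∑ j ∈ range N, Lcoeff j * ((derivative^[j] P).eval 1 - (derivative^[j] P).eval 0)
        = ((derivative P).eval 0 + (derivative P).eval 1) / 2 := by
    intro P hP
    rw [sum_mul_iterate_derivative_eval_one_sub_eval_zero _ P hP, derivative_eval_one_eq_sum P hP,
      ← coeff_zero_eq_eval_zero, coeff_derivative]
    simp only [sum_range_descFactorial_mul_Lcoeff, mul_div, mul_add, mul_ite, mul_one, mul_zero,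
      sum_add_distrib, ← sum_div, sum_ite_eq', mem_range]
    split_ifs <;> norm_num
    exact coeff_eq_zero_of_natDegree_lt (by omega)
  rw [← sum_sub_distrib]
  simpa [iterate_derivative_taylor, taylor_eval, derivative_taylor, add_comm 1 x, mul_sub] using
    hzero (taylor x G) ((natDegree_taylor G x).trans_le hG)

section IteratedDeriv

variable {𝕜 : Type*} [NontriviallyNormedField 𝕜]

theorem iteratedDeriv_eval (p : 𝕜[X]) (n : ℕ) :
    iteratedDeriv n (fun x => p.eval x) = fun x => (derivative^[n] p).eval x := by
  induction n with
  | zero => simp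
  | succ n ih =>
    rw [iteratedDeriv_succ, ih, Function.iterate_succ_apply']
    exact funext fun x => Polynomial.deriv _

theorem iteratedDeriv_iteratedDeriv_sub {F : Type*} [NormedAddCommGroup F] [NormedSpace 𝕜 F]
    {u : 𝕜 → F} {l : ℕ} {y₀ : 𝕜} (hu : ContDiffAt 𝕜 l u y₀) (v : 𝕜 → F) (j : ℕ) (x₀ : 𝕜) :
    iteratedDeriv j (fun x => iteratedDeriv l (fun y => u y - v x) y₀) x₀
      = (if j = 0 then iteratedDeriv l u y₀ else 0)
        - (if l = 0 then iteratedDeriv j v x₀ else 0) := by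
  have hinner : ∀ x, iteratedDeriv l (fun y => u y - v x) y₀
      = iteratedDeriv l u y₀ - if l = 0 then v x else 0 := fun x => by
    rw [iteratedDeriv_fun_sub hu contDiffAt_const, iteratedDeriv_const]
  simp_rw [hinner]
  rcases eq_or_ne l 0 with rfl | hl
  · rcases eq_or_ne j 0 with rfl | hj
    · simp
    · simp [iteratedDeriv_const_sub (Nat.pos_of_ne_zero hj), hj]
  · simp [hl, iteratedDeriv_const]

theorem iteratedDeriv_iteratedDeriv_eval_add_sub_eval_sub (F : 𝕜[X]) (a b : 𝕜) (j l : ℕ) :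
    iteratedDeriv j (fun h₁ => iteratedDeriv l (fun h₂ => F.eval (b + h₂) - F.eval (a - h₁)) 0) 0
      = (if j = 0 then (derivative^[l] F).eval b else 0)
        - (if l = 0 then (-1) ^ j * (derivative^[j] F).eval a else 0) := by
  have hsmooth : ContDiff 𝕜 l fun x => F.eval x := by simpa using F.contDiff_aeval (𝕜 := 𝕜) l
  have hu : ContDiffAt 𝕜 l (fun y => F.eval (b + y)) 0 :=
    (hsmooth.comp (contDiff_const.add contDiff_id)).contDiffAt
  rw [iteratedDeriv_iteratedDeriv_sub hu,
    iteratedDeriv_comp_const_add (f := fun x => F.eval x),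
    iteratedDeriv_comp_const_sub (f := fun x => F.eval x)]
  simp [iteratedDeriv_eval]

end IteratedDeriv

theorem sum_sum_mul_mul_ite_sub_ite {R : Type*} [CommRing R] {s : Finset ℕ} (hs : 0 ∈ s)
    {c : ℕ → R} (hc : c 0 = 1) (U V : ℕ → R) :
    ∑ j ∈ s, ∑ l ∈ s, c j * c l * ((if j = 0 then U l else 0) - (if l = 0 then V j else 0))
      = ∑ l ∈ s, c l * U l - ∑ j ∈ s, c j * V j := by
  simp [mul_sub, mul_ite, sum_sub_distrib, sum_ite_eq', hs, hc]

section IntegerSums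

variable {K : Type*} [Field K] [CharZero K]

theorem sum_Icc_eq_sub_add_half {g E : ℤ → K} (hE : ∀ x, E (x + 1) - E x = (g x + g (x + 1)) / 2)
    {a b : ℤ} (hab : a ≤ b) : ∑ x ∈ Icc a b, g x = E b - E a + (g a + g b) / 2 := by
  induction b, hab using Int.leInduction with
  | base => simp
  | succ b hab ih =>
    rw [← insert_Icc_right_eq_Icc_add_one (by omega), sum_insert (by simp), ih]
    linear_combination -hE b

theorem sum_Icc_ite_endpoints_mul (g : ℤ → K) {a b : ℤ} (hab : a < b) :
    ∑ x ∈ Icc a b, (if x = a ∨ x = b then (1 / 2 : K) else 1) * g x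
      = ∑ x ∈ Icc a b, g x - (g a + g b) / 2 := by
  have hfilter : (Icc a b).filter (fun x => x = a ∨ x = b) = {a, b} := by
    ext x
    simp only [mem_filter, mem_Icc, mem_insert, mem_singleton]
    omega
  have hterm : ∀ x, (if x = a ∨ x = b then (1 / 2 : K) else 1) * g x
      = g x - if x = a ∨ x = b then g x / 2 else 0 := fun x => by
    split_ifs <;> ring
  rw [sum_congr rfl fun x _ => hterm x, sum_sub_distrib, ← sum_filter, hfilter,
    sum_pair hab.ne, add_div]

end IntegerSums

/-- Exact Euler–Maclaurin formula for the weighted sum of a polynomial over the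
integer points of `[a,b]`: applying `L(∂/∂h₁)L(∂/∂h₂)` (a finite sum, since the
integral is a polynomial in `h₁,h₂`; all terms of order `> 2m ≥ deg f` vanish)
to `∫_{a-h₁}^{b+h₂} f` and evaluating at `h₁ = h₂ = 0`. -/
theorem exact_euler_maclaurin_weighted_sum_polynomial
    (a b : ℤ) (hab : a < b) (f : Polynomial ℝ) (m : ℕ) (hm : f.natDegree ≤ 2 * m) :
    (∑ x ∈ Finset.Icc a b, (if x = a ∨ x = b then (1/2 : ℝ) else 1) * f.eval (x : ℝ))
      = ∑ j ∈ Finset.range (2*m+1), ∑ l ∈ Finset.range (2*m+1),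
          Lcoeff j * Lcoeff l *
            iteratedDeriv j
              (fun h₁ : ℝ => iteratedDeriv l
                (fun h₂ : ℝ => ∫ x in ((a : ℝ) - h₁)..((b : ℝ) + h₂), f.eval x) 0) 0 := by
  set F := antiderivative f
  have hF : derivative F = f := derivative_antiderivative f
  have hFdeg : F.natDegree ≤ 2 * m + 1 := (natDegree_antiderivative_le f).trans (by omega)
  have hintegral : ∀ u v : ℝ, ∫ x in u..v, f.eval x = F.eval v - F.eval u := fun u v =>
    integral_eq_sub_of_hasDerivAt (fun x _ => hF ▸ F.hasDerivAt x)
      (f.continuous.intervalIntegrable _ _)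
  set E : ℤ → ℝ := fun x => ∑ j ∈ range (2 * m + 1), Lcoeff j * (derivative^[j] F).eval (x : ℝ)
  have hE : ∀ x, E (x + 1) - E x = (f.eval (x : ℝ) + f.eval ((x + 1 : ℤ) : ℝ)) / 2 := fun x => by
    simpa [E, hF] using sum_Lcoeff_mul_iterate_derivative_eval_add_one_sub F hFdeg x
  rw [sum_Icc_ite_endpoints_mul _ hab, sum_Icc_eq_sub_add_half hE hab.le, add_sub_cancel_right]
  simp only [hintegral, iteratedDeriv_iteratedDeriv_eval_add_sub_eval_sub,
    sum_sum_mul_mul_ite_sub_ite (by simp : 0 ∈ range (2 * m + 1)) (by simp [Lcoeff] : Lcoeff 0 = 1),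
    ← mul_assoc, Lcoeff_mul_neg_one_pow, E]
end

section
/- Let m ≥ 1 be an integer, k = ⌊m/2⌋, and let f be a C^m function on [a,b] with a < b integers. Then Σ'_{[a,b]} f = ∫_a^b f(x)dx + Σ_{j=1}^{k} P_{2j}(0)·(f^{(2j-1)}(b) - f^{(2j-1)}(a)) + (-1)^{m-1} ∫_a^b P_m(x) f^{(m)}(x) dx, where P_m(x) = B_m({x})/m!. -/
open scoped BigOperators

/-- `P_m(x) = B_m({x})/m!`, the periodized Bernoulli polynomial. -/
noncomputable def bernP (m : ℕ) (x : ℝ) : ℝ :=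
  (Polynomial.aeval (Int.fract x) (Polynomial.bernoulli m)) / (Nat.factorial m)

/-!
On each unit interval `[n, n + 1]` the function `P_m` is the polynomial `B_m(x - n) / m!`, whose
derivative is `P_{m-1}`. Integrating `∫ P_m f^{(m)}` by parts therefore trades it for the
boundary term `P_{m+1}(0) Δf^{(m)}` and `-∫ P_{m+1} f^{(m+1)}`; the boundary terms vanish for
odd `m + 1 ≥ 3` because `B_{m+1} = 0`, and for `m = 0` they produce the trapezoid
`(f(n) + f(n + 1)) / 2`. Summing these unit-interval identities over `n ∈ [a, b)` telescopes.
-/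

open MeasureTheory Set
open scoped Nat

lemma bernP_eqOn_Ico (m : ℕ) (n : ℤ) :
    EqOn (bernP m) (fun x ↦ bernoulliFun m (x - n) / m !) (Ico (n : ℝ) (n + 1)) := by
  intro x hx
  have hfloor : ⌊x⌋ = n := Int.floor_eq_iff.mpr hx
  simp only [bernP, Int.fract, hfloor, bernoulliFun, Polynomial.eval_map_algebraMap]

lemma bernP_apply_zero (m : ℕ) : bernP m 0 = bernoulli m / m ! := by
  simpa [bernoulliFun_eval_zero] using bernP_eqOn_Ico m 0 (by simp : (0 : ℝ) ∈ Ico _ _)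

lemma bernP_apply_zero_of_odd {m : ℕ} (hodd : Odd m) (hm : 1 < m) : bernP m 0 = 0 := by
  simp [bernP_apply_zero, bernoulli_eq_zero_of_odd hodd hm]

lemma periodic_bernP (m : ℕ) : Function.Periodic (bernP m) 1 := by
  intro x
  simp [bernP, Int.fract_add_one]

lemma intervalIntegrable_bernP (m : ℕ) (a b : ℝ) : IntervalIntegrable (bernP m) volume a b := by
  refine (periodic_bernP m).intervalIntegrable₀ one_ne_zero ?_ a b
  refine ((continuous_bernoulliFun m).div_const (m ! : ℝ)).intervalIntegrable 0 1 |>.congr_uIoo ?_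
  intro x hx
  rw [uIoo_of_le zero_le_one] at hx
  simpa using (bernP_eqOn_Ico m 0 (by simpa using Ioo_subset_Ico_self hx)).symm

lemma hasDerivAt_bernoulliFun_div_factorial (m : ℕ) (x : ℝ) :
    HasDerivAt (fun y ↦ bernoulliFun (m + 1) y / (m + 1)!) (bernoulliFun m x / m !) x := by
  refine ((hasDerivAt_bernoulliFun (m + 1) x).div_const ((m + 1)! : ℝ)).congr_deriv ?_
  rw [Nat.factorial_succ, add_tsub_cancel_right]
  push_cast
  field_simp

lemma integral_bernP_mul_eq (m : ℕ) (n : ℤ) {F F' : ℝ → ℝ}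
    (hF : ∀ x ∈ Icc (n : ℝ) (n + 1), HasDerivAt F (F' x) x)
    (hF' : IntervalIntegrable F' volume n (n + 1)) :
    ∫ x in (n : ℝ)..n + 1, bernP m x * F x
      = (bernoulliFun (m + 1) 1 * F (n + 1) - bernoulliFun (m + 1) 0 * F n) / (m + 1)!
        - ∫ x in (n : ℝ)..n + 1, bernP (m + 1) x * F' x := by
  have hn : (n : ℝ) ≤ n + 1 := by linarith
  have hcongr (k : ℕ) (G : ℝ → ℝ) : ∫ x in (n : ℝ)..n + 1, bernP k x * G x
      = ∫ x in (n : ℝ)..n + 1, G x * (bernoulliFun k (x - n) / k !) :=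
    intervalIntegral.integral_congr_Ioo_of_le hn fun x hx ↦ by
      rw [bernP_eqOn_Ico k n (Ioo_subset_Ico_self hx), mul_comm]
  have hparts := intervalIntegral.integral_mul_deriv_eq_deriv_mul
    (u := F) (v := fun x ↦ bernoulliFun (m + 1) (x - n) / (m + 1)!)
    (fun x hx ↦ hF x (by rwa [uIcc_of_le hn] at hx))
    (fun x _ ↦ (hasDerivAt_bernoulliFun_div_factorial m (x - n)).comp_sub_const x n)
    hF' ((((continuous_bernoulliFun m).comp (continuous_sub_right (n : ℝ))).div_const
      (m ! : ℝ)).intervalIntegrable _ _)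
  rw [hcongr, hcongr, hparts]
  simp only [add_sub_cancel_left, sub_self]
  ring

lemma sum_Icc_succ_div_two (c g : ℕ → ℝ) (hc : ∀ k, Odd k → 1 < k → c k = 0) {m : ℕ}
    (hm : 1 ≤ m) :
    ∑ j ∈ Finset.Icc 1 ((m + 1) / 2), c (2 * j) * g (2 * j - 1)
      = ∑ j ∈ Finset.Icc 1 (m / 2), c (2 * j) * g (2 * j - 1)
        + (-1) ^ (m - 1) * c (m + 1) * g m := by
  rcases Nat.even_or_odd m with ⟨k, rfl⟩ | ⟨k, rfl⟩
  · rw [hc (k + k + 1) ⟨k, by ring⟩ (by omega), show (k + k + 1) / 2 = (k + k) / 2 by omega]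
    ring
  · rw [show (2 * k + 1 + 1) / 2 = k + 1 by omega, show (2 * k + 1) / 2 = k by omega,
      Finset.sum_Icc_succ_top (by omega), add_tsub_cancel_right, (even_two_mul k).neg_one_pow,
      show 2 * (k + 1) = 2 * k + 1 + 1 by ring, add_tsub_cancel_right]
    ring

lemma euler_maclaurin_unit_interval (n : ℤ) {m : ℕ} (hm : 1 ≤ m) (f : ℕ → ℝ → ℝ)
    (hderiv : ∀ j < m, ∀ x ∈ Icc (n : ℝ) (n + 1), HasDerivAt (f j) (f (j + 1) x) x)
    (hcont : ContinuousOn (f m) (Icc (n : ℝ) (n + 1))) :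
    (f 0 n + f 0 (n + 1)) / 2
      = (∫ x in (n : ℝ)..n + 1, f 0 x)
        + (∑ j ∈ Finset.Icc 1 (m / 2),
            bernP (2 * j) 0 * (f (2 * j - 1) (n + 1) - f (2 * j - 1) n))
        + (-1) ^ (m - 1) * ∫ x in (n : ℝ)..n + 1, bernP m x * f m x := by
  have hn : (n : ℝ) ≤ n + 1 := by linarith
  induction m, hm using Nat.le_induction with
  | base =>
    have hparts :=
      integral_bernP_mul_eq 0 n (hderiv 0 one_pos) (hcont.intervalIntegrable_of_Icc hn)
    simp only [bernP, Polynomial.bernoulli_zero, map_one, Nat.factorial_zero, Nat.cast_one,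
      div_one, one_mul, zero_add, bernoulliFun_one] at hparts
    simp only [Nat.reduceDiv, Finset.Icc_eq_empty_of_lt one_pos, Finset.sum_empty, tsub_self,
      pow_zero, one_mul, bernP]
    linarith
  | succ m hm ih =>
    have hcont_m : ContinuousOn (f m) (Icc (n : ℝ) (n + 1)) := fun x hx ↦
      (hderiv m (by omega) x hx).continuousAt.continuousWithinAt
    have hparts := integral_bernP_mul_eq m n (hderiv m (by omega))
      (hcont.intervalIntegrable_of_Icc hn)
    rw [bernoulliFun_endpoints_eq_of_ne_one (by omega), ← mul_sub, mul_div_right_comm,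
      bernoulliFun_eval_zero, ← bernP_apply_zero] at hparts
    have hsign : (-1 : ℝ) ^ m = -(-1) ^ (m - 1) := by
      rw [← Nat.sub_add_cancel hm, pow_succ, Nat.add_sub_cancel, mul_neg_one]
    rw [sum_Icc_succ_div_two (fun k ↦ bernP k 0) (fun j ↦ f j (n + 1) - f j n)
      (fun k hodd hk ↦ bernP_apply_zero_of_odd hodd hk) hm, ih (fun j hj ↦ hderiv j (by omega))
      hcont_m, hparts, add_tsub_cancel_right, hsign]
    ring

lemma sum_Ico_int_sub {M : Type*} [AddCommGroup M] (F : ℝ → M) {a b : ℤ} (hab : a ≤ b) :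
    ∑ n ∈ Finset.Ico a b, (F (n + 1) - F n) = F b - F a := by
  induction b, hab using Int.leInduction with
  | base => simp
  | succ b hab ih =>
    rw [← Finset.insert_Ico_right_eq_Ico_add_one hab, Finset.sum_insert Finset.right_notMem_Ico,
      ih]
    push_cast
    abel

lemma sum_Ico_int_integral {E : Type*} [NormedAddCommGroup E] [NormedSpace ℝ E] {g : ℝ → E}
    {a b : ℤ} (hab : a ≤ b) (hg : IntervalIntegrable g volume a b) :
    ∑ n ∈ Finset.Ico a b, ∫ x in (n : ℝ)..n + 1, g x = ∫ x in (a : ℝ)..b, g x := by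
  have hg' {y : ℝ} (hy : y ∈ Icc (a : ℝ) b) : IntervalIntegrable g volume a y :=
    hg.mono_set (uIcc_subset_uIcc left_mem_uIcc (Icc_subset_uIcc hy))
  calc ∑ n ∈ Finset.Ico a b, ∫ x in (n : ℝ)..n + 1, g x
      = ∑ n ∈ Finset.Ico a b, ((∫ x in (a : ℝ)..n + 1, g x) - ∫ x in (a : ℝ)..n, g x) := by
        refine Finset.sum_congr rfl fun n hn ↦ ?_
        obtain ⟨han, hnb⟩ := Finset.mem_Ico.mp hn
        have han' : (a : ℝ) ≤ n := by exact_mod_cast han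
        have hnb' : (n : ℝ) + 1 ≤ b := by exact_mod_cast hnb
        exact (intervalIntegral.integral_interval_sub_left (hg' ⟨by linarith, hnb'⟩)
          (hg' ⟨han', by linarith⟩)).symm
    _ = ∫ x in (a : ℝ)..b, g x := by
        rw [sum_Ico_int_sub (fun y ↦ ∫ x in (a : ℝ)..y, g x) hab,
          intervalIntegral.integral_same, sub_zero]

lemma sum_Icc_int_trapezoid (g : ℝ → ℝ) {a b : ℤ} (hab : a < b) :
    ∑ x ∈ Finset.Icc a b, (if x = a ∨ x = b then (1 / 2 : ℝ) else 1) * g x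
      = ∑ n ∈ Finset.Ico a b, (g n + g (n + 1)) / 2 := by
  have hinterior : ∑ x ∈ Finset.Ioo a b, (if x = a ∨ x = b then (1 / 2 : ℝ) else 1) * g x
      = ∑ x ∈ Finset.Ioo a b, g x :=
    Finset.sum_congr rfl fun x hx ↦ by
      obtain ⟨hax, hxb⟩ := Finset.mem_Ioo.mp hx
      rw [if_neg (by omega), one_mul]
  have hhalves : ∑ n ∈ Finset.Ico a b, (g n + g (n + 1)) / 2
      = ∑ n ∈ Finset.Ico a b, g n + (g b - g a) / 2 := by
    rw [← sum_Ico_int_sub g hab.le, Finset.sum_div, ← Finset.sum_add_distrib]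
    exact Finset.sum_congr rfl fun n _ ↦ by ring
  rw [hhalves, Finset.Icc_eq_cons_Ico hab.le, Finset.sum_cons, Finset.Ico_eq_cons_Ioo hab,
    Finset.sum_cons, Finset.sum_cons, hinterior, if_pos (Or.inr rfl), if_pos (Or.inl rfl)]
  ring

/-- Euler–Maclaurin with remainder on an interval: for integers `a < b`, `m ≥ 1`,
`k = ⌊m/2⌋`, and `f` of class `C^m` on `[a,b]` (given via its tower of derivatives
`f 0, f 1, …, f m`),
`Σ'_{[a,b]} f = ∫_a^b f + Σ_{j=1}^k P_{2j}(0)(f^{(2j-1)}(b) - f^{(2j-1)}(a))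
  + (-1)^{m-1} ∫_a^b P_m(x) f^{(m)}(x) dx`. -/
theorem euler_maclaurin_interval_with_remainder
    (a b : ℤ) (hab : a < b) (m : ℕ) (hm : 1 ≤ m) (f : ℕ → ℝ → ℝ)
    (hderiv : ∀ j < m, ∀ x ∈ Set.Icc (a : ℝ) (b : ℝ), HasDerivAt (f j) (f (j+1) x) x)
    (hcont : ContinuousOn (f m) (Set.Icc (a : ℝ) (b : ℝ))) :
    (∑ x ∈ Finset.Icc a b, (if x = a ∨ x = b then (1/2 : ℝ) else 1) * f 0 (x : ℝ))
      = (∫ x in (a : ℝ)..(b : ℝ), f 0 x)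
        + (∑ j ∈ Finset.Icc 1 (m / 2),
            bernP (2*j) 0 * (f (2*j - 1) (b : ℝ) - f (2*j - 1) (a : ℝ)))
        + (-1 : ℝ) ^ (m - 1) * ∫ x in (a : ℝ)..(b : ℝ), bernP m x * f m x := by
  have hab' : (a : ℝ) ≤ b := by exact_mod_cast hab.le
  have hsub {n : ℤ} (hn : n ∈ Finset.Ico a b) : Icc (n : ℝ) (n + 1) ⊆ Icc (a : ℝ) b := by
    obtain ⟨han, hnb⟩ := Finset.mem_Ico.mp hn
    exact Icc_subset_Icc (by exact_mod_cast han) (by exact_mod_cast hnb)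
  have hcont0 : ContinuousOn (f 0) (Icc (a : ℝ) b) := fun x hx ↦
    (hderiv 0 (by omega) x hx).continuousAt.continuousWithinAt
  rw [sum_Icc_int_trapezoid (f 0) hab, Finset.sum_congr rfl fun n hn ↦
      euler_maclaurin_unit_interval n hm f (fun j hj x hx ↦ hderiv j hj x (hsub hn hx))
        (hcont.mono (hsub hn)),
    Finset.sum_add_distrib, Finset.sum_add_distrib, ← Finset.mul_sum, Finset.sum_comm,
    sum_Ico_int_integral hab.le (hcont0.intervalIntegrable_of_Icc hab'),
    sum_Ico_int_integral hab.le ((intervalIntegrable_bernP m a b).mul_continuousOn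
      (by rwa [uIcc_of_le hab']))]
  simp only [← Finset.mul_sum, sum_Ico_int_sub _ hab.le]
end

section
/- Let λ ≠ 1 be a root of unity of order N. Define Q_{1,λ}(x) = (λ/(1-λ))·Σ_{n∈ℤ} λⁿ·1_{[n,n+1]}(x). Then Q_{1,λ} is N-periodic, ∫₀ᴺ Q_{1,λ}(x)dx = 0, and for any C¹ function f of compact support on ℝ, (1/2)f(0) + Σ_{n≥1} λⁿ f(n) = (1/2 + λ/(1-λ))·f(0) + ∫₀^∞ Q_{1,λ}(x) f'(x) dx. -/
/-!
On each interval `(n, n + 1)` the function `Q_{1,λ}` is the constant `c λⁿ` with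
`c = λ / (1 - λ)`, so `∫ₙⁿ⁺¹ Q_{1,λ} f' = c λⁿ (f(n + 1) - f(n))`. Summing over `n` is a summation
by parts, which works because `c λⁿ - c λⁿ⁺¹ = λⁿ⁺¹`; the boundary term at infinity vanishes by
compact support. Periodicity and mean zero come from `λᴺ = 1` and `1 + λ + ⋯ + λᴺ⁻¹ = 0`.
-/

open MeasureTheory

/-- `Q_{1,λ}(x) = (λ/(1-λ))·Σ_{n∈ℤ} λⁿ·1_{[n,n+1]}(x)`, i.e. the function whose
value for `x ∈ (n, n+1)` is `(λ/(1-λ))·λⁿ = (λ/(1-λ))·λ^⌊x⌋`. -/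
noncomputable def Qone (lam : ℂ) (x : ℝ) : ℂ := (lam / (1 - lam)) * lam ^ (⌊x⌋ : ℤ)

open Set Filter intervalIntegral

lemma HasCompactSupport.eventually_forall_ge_eq_zero {E : Type*} [Zero E] {f : ℝ → E}
    (hf : HasCompactSupport f) : ∀ᶠ M : ℕ in atTop, ∀ x : ℝ, M ≤ x → f x = 0 := by
  obtain ⟨a, ha⟩ := eventually_atTop.mp <| (hasCompactSupport_iff_eventuallyEq.mp hf).filter_mono
    (coclosedCompact_eq_cocompact (X := ℝ) ▸ atTop_le_cocompact)
  filter_upwards [eventually_ge_atTop ⌈a⌉₊] with M hM x hx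
  exact ha x ((Nat.le_ceil a).trans ((Nat.cast_le.mpr hM).trans hx))

lemma Finset.sum_twisted_mul_sub_eq (lam : ℂ) (hne : lam ≠ 1) (a : ℕ → ℂ) (M : ℕ) :
    ∑ k ∈ range M, lam / (1 - lam) * lam ^ k * (a (k + 1) - a k)
      = ∑ k ∈ range M, lam ^ (k + 1) * a (k + 1)
        + lam / (1 - lam) * (lam ^ M * a M - a 0) := by
  have hsub : 1 - lam ≠ 0 := sub_ne_zero.mpr hne.symm
  have hterm : ∀ k, lam / (1 - lam) * lam ^ k * (a (k + 1) - a k)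
      = lam ^ (k + 1) * a (k + 1)
        + lam / (1 - lam) * (lam ^ (k + 1) * a (k + 1) - lam ^ k * a k) := by
    intro k
    field_simp
    ring
  rw [sum_congr rfl fun k _ => hterm k, sum_add_distrib, ← mul_sum,
    sum_range_sub (fun k => lam ^ k * a k), pow_zero, one_mul]

section Qone

variable (lam : ℂ)

lemma Qone_periodic {N : ℕ} (hroot : lam ^ N = 1) : Function.Periodic (Qone lam) N := by
  rcases eq_or_ne N 0 with rfl | hN
  · simp [Function.Periodic]
  have hlam : lam ≠ 0 := by
    rintro rfl
    simp [hN] at hroot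
  intro x
  simp only [Qone, Int.floor_add_natCast, zpow_add₀ hlam, zpow_natCast, hroot, mul_one]

lemma Qone_ae_eq_on_Ioc (n : ℕ) :
    Qone lam =ᵐ[volume.restrict (Ioc (n : ℝ) (n + 1))] fun _ => lam / (1 - lam) * lam ^ n := by
  rw [← Measure.restrict_congr_set Ioo_ae_eq_Ioc]
  refine ae_restrict_of_forall_mem measurableSet_Ioo fun x hx => ?_
  have hfloor : ⌊x⌋ = n :=
    Int.floor_eq_iff.mpr ⟨by push_cast; exact hx.1.le, by push_cast; exact hx.2⟩
  simp [Qone, hfloor]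

lemma intervalIntegrable_Qone_mul {g : ℝ → ℂ} (n : ℕ)
    (hg : IntervalIntegrable g volume n (n + 1)) :
    IntervalIntegrable (fun x => Qone lam x * g x) volume n (n + 1) := by
  rw [intervalIntegrable_iff_integrableOn_Ioc_of_le (by linarith)] at hg ⊢
  exact (hg.const_mul _).congr ((Qone_ae_eq_on_Ioc lam n).mul (ae_eq_refl g)).symm

lemma integral_Qone_mul (g : ℝ → ℂ) (n : ℕ) :
    ∫ x in (n : ℝ)..n + 1, Qone lam x * g x
      = lam / (1 - lam) * lam ^ n * ∫ x in (n : ℝ)..n + 1, g x := by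
  rw [integral_of_le (by linarith), integral_of_le (by linarith), ← MeasureTheory.integral_const_mul]
  exact integral_congr_ae ((Qone_ae_eq_on_Ioc lam n).mul (ae_eq_refl g))

lemma integral_Qone_mul_eq_sum {g : ℝ → ℂ} (hg : Continuous g) (M : ℕ) :
    ∫ x in (0 : ℝ)..M, Qone lam x * g x
      = ∑ k ∈ Finset.range M, lam / (1 - lam) * lam ^ k * ∫ x in (k : ℝ)..k + 1, g x := by
  have hsum := sum_integral_adjacent_intervals (a := fun k : ℕ => (k : ℝ)) (n := M)
    (μ := volume) (f := fun x => Qone lam x * g x) fun k _ => by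
      simpa using intervalIntegrable_Qone_mul lam k (hg.intervalIntegrable _ _)
  simp only [Nat.cast_zero, Nat.cast_add_one] at hsum
  rw [← hsum]
  exact Finset.sum_congr rfl fun k _ => integral_Qone_mul lam g k

lemma integral_Qone_eq_zero {N : ℕ} (hroot : lam ^ N = 1) (hne : lam ≠ 1) :
    ∫ x in (0 : ℝ)..N, Qone lam x = 0 := by
  have h := integral_Qone_mul_eq_sum lam (g := fun _ => 1) continuous_const N
  simp only [mul_one, intervalIntegral.integral_const, add_sub_cancel_left, one_smul] at h
  rw [h, ← Finset.mul_sum, geom_sum_eq hne, hroot, sub_self, zero_div, mul_zero]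

theorem integral_Qone_mul_deriv (hne : lam ≠ 1) {f : ℝ → ℂ} (hf : ContDiff ℝ 1 f) (M : ℕ) :
    ∫ x in (0 : ℝ)..M, Qone lam x * deriv f x
      = ∑ k ∈ Finset.range M, lam ^ (k + 1) * f (k + 1)
        + lam / (1 - lam) * (lam ^ M * f M - f 0) := by
  have hf' : Continuous (deriv f) := hf.continuous_deriv le_rfl
  have hparts := Finset.sum_twisted_mul_sub_eq lam hne (fun k => f k) M
  push_cast at hparts
  rw [integral_Qone_mul_eq_sum lam hf', ← hparts]
  refine Finset.sum_congr rfl fun k _ => ?_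
  rw [integral_deriv_eq_sub (fun x _ => hf.differentiable one_ne_zero x)
    (hf'.intervalIntegrable _ _)]

end Qone

theorem twisted_EM_ray_first_order_general
    (N : ℕ) (lam : ℂ) (hroot : lam ^ N = 1) (hne : lam ≠ 1)
    (f : ℝ → ℂ) (hf : ContDiff ℝ 1 f) (hsupp : HasCompactSupport f) :
    Function.Periodic (Qone lam) (N : ℝ) ∧
    (∫ x in (0:ℝ)..(N : ℝ), Qone lam x) = 0 ∧
    (1/2) * f 0 + (∑' n : ℕ, lam ^ (n + 1) * f ((n : ℝ) + 1))
      = (1/2 + lam / (1 - lam)) * f 0 + ∫ x in Set.Ioi (0:ℝ), Qone lam x * deriv f x := by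
  refine ⟨Qone_periodic lam hroot, integral_Qone_eq_zero lam hroot hne, ?_⟩
  obtain ⟨M, hfM, hf'M⟩ :=
    (hsupp.eventually_forall_ge_eq_zero.and hsupp.deriv.eventually_forall_ge_eq_zero).exists
  have htsum : ∑' n : ℕ, lam ^ (n + 1) * f ((n : ℝ) + 1)
      = ∑ n ∈ Finset.range M, lam ^ (n + 1) * f ((n : ℝ) + 1) :=
    tsum_eq_sum fun n hn => by
      rw [hfM _ (by simp at hn; linarith [(Nat.cast_le (α := ℝ)).mpr hn]), mul_zero]
  have hIoi : ∫ x in Ioi (0 : ℝ), Qone lam x * deriv f x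
      = ∫ x in (0 : ℝ)..M, Qone lam x * deriv f x := by
    rw [integral_of_le M.cast_nonneg, setIntegral_eq_of_subset_of_forall_sdiff_eq_zero
      measurableSet_Ioi Ioc_subset_Ioi_self]
    rintro x ⟨hx0, hx⟩
    rw [hf'M x (not_le.mp fun hxM => hx ⟨hx0, hxM⟩).le, mul_zero]
  rw [htsum, hIoi, integral_Qone_mul_deriv lam hne hf, hfM M le_rfl]
  ring

/-- Twisted first-order Euler–Maclaurin for a ray: if `λ ≠ 1` is a root of unity of
order `N`, then `Q_{1,λ}` is `N`-periodic with mean zero over `[0,N]`, and for any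
`C¹` function `f` of compact support,
`(1/2)f(0) + Σ_{n≥1} λⁿ f(n) = (1/2 + λ/(1-λ))f(0) + ∫₀^∞ Q_{1,λ}(x) f'(x) dx`. -/
theorem twisted_EM_ray_first_order
    (N : ℕ) (hN : 0 < N) (lam : ℂ) (hroot : lam ^ N = 1) (hne : lam ≠ 1)
    (f : ℝ → ℂ) (hf : ContDiff ℝ 1 f) (hsupp : HasCompactSupport f) :
    Function.Periodic (Qone lam) (N : ℝ) ∧
    (∫ x in (0:ℝ)..(N : ℝ), Qone lam x) = 0 ∧
    (1/2) * f 0 + (∑' n : ℕ, lam ^ (n + 1) * f ((n : ℝ) + 1))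
      = (1/2 + lam / (1 - lam)) * f 0 + ∫ x in Set.Ioi (0:ℝ), Qone lam x * deriv f x :=
  twisted_EM_ray_first_order_general N lam hroot hne f hf hsupp
end

section
/- Let λ ≠ 1 be a root of unity, k ≥ 1 an integer, and define the polynomial M^{k,λ}(S) = (1/2 + λ/(1-λ))S + Q_{2,λ}(0)S² + ... + Q_{k,λ}(0)S^k. Then for any f ∈ C_c^k(ℝ), (1/2)f(0) + Σ_{n≥1} λⁿ f(n) = [M^{k,λ}(∂/∂h) ∫_{-h}^∞ f(x)dx]|_{h=0} + (-1)^{k-1} ∫₀^∞ Q_{k,λ}(x) f^{(k)}(x) dx. -/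
/-!
On `(n, n + 1)` the function `Q₁` is the constant `λⁿ⁺¹/(1 - λ)`, so `∫₀^b Q₁ f'` is a sum of
differences `f(n + 1) - f(n)` which, because `λ/(1 - λ) · (λ - 1) = -λ`, telescopes to
`∑_{n<b} λⁿ⁺¹ f(n + 1) - λ/(1 - λ) · f(0)`. For `m ≥ 2` the `Q_m` are continuous with
`Q_m' = Q_{m-1}` off the integers, so integrating by parts across them trades
`∫₀^b Q_m f⁽ᵐ⁾` for the boundary term `-Q_{m+1}(0) f⁽ᵐ⁾(0)` and `-∫₀^b Q_{m+1} f⁽ᵐ⁺¹⁾`.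
Choosing an integer `b` beyond the support of `f` kills all other boundary terms, and
`(∂/∂h)^m ∫_{-h}^∞ f |_{h=0} = (-1)^{m-1} f^{(m-1)}(0)` identifies the coefficients.
-/

open MeasureTheory Set

theorem eqOn_comp_floor_Ioo {α : Type*} (a : ℤ → α) (n : ℤ) :
    EqOn (fun x : ℝ => a ⌊x⌋) (fun _ => a n) (Ioo (n : ℝ) (n + 1)) := fun x hx => by
  simp only [Int.floor_eq_iff.2 ⟨hx.1.le, hx.2⟩]

theorem eqOn_comp_floor_mul_Ioo (a : ℤ → ℂ) (ψ : ℝ → ℂ) (n : ℤ) :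
    EqOn (fun x : ℝ => a ⌊x⌋ * ψ x) (fun x => a n * ψ x) (Ioo (n : ℝ) (n + 1)) :=
  fun x hx => congrArg (· * ψ x) (eqOn_comp_floor_Ioo a n hx)

theorem integral_comp_floor_mul_unit (a : ℤ → ℂ) (ψ : ℝ → ℂ) (n : ℤ) :
    ∫ x in (n : ℝ)..n + 1, a ⌊x⌋ * ψ x = a n * ∫ x in (n : ℝ)..n + 1, ψ x := by
  rw [← intervalIntegral.integral_const_mul]
  exact intervalIntegral.integral_congr_Ioo_of_le (by linarith) (eqOn_comp_floor_mul_Ioo a ψ n)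

theorem intervalIntegrable_comp_floor_mul_unit (a : ℤ → ℂ) {ψ : ℝ → ℂ} (hψ : Continuous ψ)
    (n : ℤ) : IntervalIntegrable (fun x => a ⌊x⌋ * ψ x) volume n (n + 1) :=
  ((continuous_const.mul hψ).intervalIntegrable _ _).congr_uIoo <|
    (uIoo_of_le (by linarith : (n : ℝ) ≤ n + 1)).symm ▸ (eqOn_comp_floor_mul_Ioo a ψ n).symm

theorem intervalIntegrable_comp_floor_mul (a : ℤ → ℂ) {ψ : ℝ → ℂ} (hψ : Continuous ψ)
    (b : ℕ) : IntervalIntegrable (fun x => a ⌊x⌋ * ψ x) volume 0 b := by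
  simpa using IntervalIntegrable.trans_iterate (a := fun n : ℕ => (n : ℝ)) (n := b)
    fun n _ => by simpa using intervalIntegrable_comp_floor_mul_unit a hψ n

theorem integral_comp_floor_mul_eq_sum (a : ℤ → ℂ) {ψ : ℝ → ℂ} (hψ : Continuous ψ) (b : ℕ) :
    ∫ x in (0 : ℝ)..b, a ⌊x⌋ * ψ x = ∑ n ∈ Finset.range b, a n * ∫ x in (n : ℝ)..n + 1, ψ x := by
  have hadj := intervalIntegral.sum_integral_adjacent_intervals (a := fun n : ℕ => (n : ℝ))
    (μ := volume) (n := b) fun n _ => by simpa using intervalIntegrable_comp_floor_mul_unit a hψ n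
  simp only [Nat.cast_zero, Nat.cast_succ] at hadj
  rw [← hadj]
  refine Finset.sum_congr rfl fun n _ => ?_
  simpa using integral_comp_floor_mul_unit a ψ n

theorem sum_twisted_eq_integral_floor_mul_deriv {lam : ℂ} (hne : lam ≠ 1) {f : ℝ → ℂ}
    (hf : ContDiff ℝ 1 f) (b : ℕ) (hfb : f b = 0) :
    (1/2) * f 0 + ∑ n ∈ Finset.range b, lam ^ (n + 1) * f ((n : ℝ) + 1)
      = (1/2 + lam / (1 - lam)) * f 0
        + ∫ x in (0 : ℝ)..b, lam / (1 - lam) * lam ^ ⌊x⌋ * deriv f x := by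
  set c := lam / (1 - lam)
  have hc : c * (1 - lam) = lam := div_mul_cancel₀ _ (sub_ne_zero.2 hne.symm)
  have hunit (n : ℕ) : c * lam ^ n * ∫ x in (n : ℝ)..n + 1, deriv f x
      = lam ^ (n + 1) * f ((n : ℝ) + 1)
        + (c * lam ^ (n + 1) * f (n + 1 : ℕ) - c * lam ^ n * f n) := by
    rw [intervalIntegral.integral_deriv_eq_sub
      (fun x _ => (hf.differentiable one_ne_zero).differentiableAt)
      ((hf.continuous_deriv le_rfl).intervalIntegrable _ _)]
    push_cast
    linear_combination (lam ^ n * f ((n : ℝ) + 1)) * hc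
  rw [integral_comp_floor_mul_eq_sum (fun n => c * lam ^ n) (hf.continuous_deriv le_rfl)]
  simp only [zpow_natCast, hunit, Finset.sum_add_distrib,
    Finset.sum_range_sub (fun n => c * lam ^ n * f n), hfb]
  push_cast
  ring

theorem integral_mul_eq_sub_integral_mul_of_hasDerivAt_off_int {P P' g g' : ℝ → ℂ} {a b : ℝ}
    (hP : Continuous P) (hPd : ∀ x, Int.fract x ≠ 0 → HasDerivAt P (P' x) x)
    (hg : ∀ x, HasDerivAt g (g' x) x) (hP'g : IntervalIntegrable (fun x => P' x * g x) volume a b)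
    (hPg' : IntervalIntegrable (fun x => P x * g' x) volume a b) :
    ∫ x in a..b, P' x * g x = P b * g b - P a * g a - ∫ x in a..b, P x * g' x := by
  rw [eq_sub_iff_add_eq, ← intervalIntegral.integral_add hP'g hPg']
  refine integral_eq_of_hasDerivAt_off_countable _ _ (countable_range ((↑) : ℤ → ℝ))
    (hP.mul (continuous_iff_continuousAt.2 fun x => (hg x).continuousAt)).continuousOn
    (fun x hx => (hPd x fun h => hx.2 (Int.fract_eq_zero_iff.1 h)).mul (hg x))
    (hP'g.add hPg')

section TwistedEulerMaclaurin

variable {lam : ℂ} {Q : ℕ → ℝ → ℂ}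

theorem intervalIntegrable_Q_mul (hQ1 : ∀ x : ℝ, Q 1 x = lam / (1 - lam) * lam ^ ⌊x⌋)
    (hQcont : ∀ m, 2 ≤ m → Continuous (Q m)) {m : ℕ} (hm : 1 ≤ m) {ψ : ℝ → ℂ}
    (hψ : Continuous ψ) (b : ℕ) : IntervalIntegrable (fun x => Q m x * ψ x) volume 0 b := by
  obtain rfl | hm := hm.eq_or_lt
  · simpa only [hQ1] using
      intervalIntegrable_comp_floor_mul (fun n => lam / (1 - lam) * lam ^ n) hψ b
  · exact ((hQcont m hm).mul hψ).intervalIntegrable _ _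

theorem integral_Q_mul_iteratedDeriv (hQ1 : ∀ x : ℝ, Q 1 x = lam / (1 - lam) * lam ^ ⌊x⌋)
    (hQcont : ∀ m, 2 ≤ m → Continuous (Q m))
    (hQderiv : ∀ m, 2 ≤ m → ∀ x : ℝ, Int.fract x ≠ 0 → HasDerivAt (Q m) (Q (m - 1) x) x)
    {m : ℕ} (hm : 1 ≤ m) {f : ℝ → ℂ} (hf : ContDiff ℝ (m + 1) f) (b : ℕ)
    (hfb : iteratedDeriv m f b = 0) :
    ∫ x in (0 : ℝ)..b, Q m x * iteratedDeriv m f x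
      = -(Q (m + 1) 0 * iteratedDeriv m f 0)
        - ∫ x in (0 : ℝ)..b, Q (m + 1) x * iteratedDeriv (m + 1) f x := by
  have hderiv (x : ℝ) : HasDerivAt (iteratedDeriv m f) (iteratedDeriv (m + 1) f x) x := by
    rw [iteratedDeriv_succ]
    exact (hf.differentiable_iteratedDeriv m (by exact_mod_cast m.lt_succ_self) x).hasDerivAt
  have hcont (j : ℕ) (hj : j ≤ m + 1) : Continuous (iteratedDeriv j f) :=
    hf.continuous_iteratedDeriv j (by exact_mod_cast hj)
  rw [integral_mul_eq_sub_integral_mul_of_hasDerivAt_off_int (hQcont (m + 1) (by omega))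
      (by simpa using hQderiv (m + 1) (by omega)) hderiv
      (intervalIntegrable_Q_mul hQ1 hQcont hm (hcont m (by omega)) b)
      (intervalIntegrable_Q_mul hQ1 hQcont (by omega) (hcont (m + 1) le_rfl) b), hfb]
  ring

theorem twisted_EM_interval_with_remainder (hne : lam ≠ 1)
    (hQ1 : ∀ x : ℝ, Q 1 x = lam / (1 - lam) * lam ^ ⌊x⌋)
    (hQcont : ∀ m, 2 ≤ m → Continuous (Q m))
    (hQderiv : ∀ m, 2 ≤ m → ∀ x : ℝ, Int.fract x ≠ 0 → HasDerivAt (Q m) (Q (m - 1) x) x)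
    {f : ℝ → ℂ} (b : ℕ) (hfb : ∀ m, iteratedDeriv m f b = 0) {k : ℕ} (hk : 1 ≤ k)
    (hf : ContDiff ℝ k f) :
    (1/2) * f 0 + ∑ n ∈ Finset.range b, lam ^ (n + 1) * f ((n : ℝ) + 1)
      = (∑ m ∈ Finset.Icc 1 k,
          (if m = 1 then 1/2 + lam / (1 - lam) else Q m 0) *
            ((-1 : ℂ) ^ (m - 1) * iteratedDeriv (m - 1) f 0))
        + (-1 : ℂ) ^ (k - 1) * ∫ x in (0 : ℝ)..b, Q k x * iteratedDeriv k f x := by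
  induction k, hk using Nat.le_induction with
  | base =>
    simp only [Finset.Icc_self, Finset.sum_singleton, if_true, Nat.sub_self, pow_zero,
      iteratedDeriv_zero, iteratedDeriv_one, one_mul, hQ1]
    exact sum_twisted_eq_integral_floor_mul_deriv hne hf b (by simpa using hfb 0)
  | succ k hk ih =>
    rw [ih (hf.of_le (by exact_mod_cast k.le_succ)),
      integral_Q_mul_iteratedDeriv hQ1 hQcont hQderiv hk hf b (hfb k),
      Finset.sum_Icc_succ_top (by omega), if_neg (by omega)]
    obtain ⟨j, rfl⟩ := Nat.exists_eq_add_of_le hk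
    simp only [Nat.add_sub_cancel, Nat.add_sub_cancel_left]
    ring

end TwistedEulerMaclaurin

section Ray

variable {E : Type*} [NormedAddCommGroup E] [NormedSpace ℝ E]

theorem HasCompactSupport.exists_natCast_iteratedDeriv_eq_zero {f : ℝ → E}
    (hf : HasCompactSupport f) : ∃ b : ℕ, ∀ m x, (b : ℝ) ≤ x → iteratedDeriv m f x = 0 := by
  obtain ⟨R, hR⟩ := hf.isCompact.bddAbove
  obtain ⟨b, hb⟩ := exists_nat_gt R
  refine ⟨b, fun m x hx => ?_⟩
  have hx : x ∉ tsupport f := fun h => by linarith [hR h]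
  rw [(notMem_tsupport_iff_eventuallyEq.1 hx).iteratedDeriv_eq]
  simp

theorem hasDerivAt_integral_Ioi_neg [CompleteSpace E] {f : ℝ → E} (hfi : Integrable f)
    (hfc : Continuous f) (h : ℝ) : HasDerivAt (fun h => ∫ x in Ioi (-h), f x) (f (-h)) h := by
  have hsplit : (fun h => ∫ x in Ioi (-h), f x)
      = fun h => (∫ x in (-h)..0, f x) + ∫ x in Ioi (0 : ℝ), f x := funext fun h =>
    (intervalIntegral.integral_interval_add_Ioi hfi.integrableOn hfi.integrableOn).symm
  have hleft := intervalIntegral.integral_hasDerivAt_left (b := 0) hfi.intervalIntegrable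
    (hfc.stronglyMeasurableAtFilter _ _) hfc.continuousAt (a := -h)
  rw [hsplit]
  simpa using (hleft.scomp h (hasDerivAt_neg h)).add_const (∫ x in Ioi (0 : ℝ), f x)

theorem iteratedDeriv_succ_integral_Ioi_neg [CompleteSpace E] {f : ℝ → E} (hfi : Integrable f)
    (hfc : Continuous f) (m : ℕ) (a : ℝ) :
    iteratedDeriv (m + 1) (fun h => ∫ x in Ioi (-h), f x) a
      = (-1 : ℝ) ^ m • iteratedDeriv m f (-a) := by
  rw [iteratedDeriv_succ', funext fun h => (hasDerivAt_integral_Ioi_neg hfi hfc h).deriv,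
    iteratedDeriv_comp_neg]

end Ray

theorem twisted_EM_ray_with_remainder_general
    (lam : ℂ) (hne : lam ≠ 1)
    (k : ℕ) (hk : 1 ≤ k) (Q : ℕ → ℝ → ℂ)
    (hQ1 : ∀ x : ℝ, Q 1 x = (lam / (1 - lam)) * lam ^ (⌊x⌋ : ℤ))
    (hQcont : ∀ m, 2 ≤ m → Continuous (Q m))
    (hQderiv : ∀ m, 2 ≤ m → ∀ x : ℝ, Int.fract x ≠ 0 → HasDerivAt (Q m) (Q (m - 1) x) x)
    (f : ℝ → ℂ) (hf : ContDiff ℝ k f) (hsupp : HasCompactSupport f) :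
    (1/2) * f 0 + (∑' n : ℕ, lam ^ (n + 1) * f ((n : ℝ) + 1))
      = (∑ m ∈ Finset.Icc 1 k,
          (if m = 1 then 1/2 + lam / (1 - lam) else Q m 0) *
            iteratedDeriv m (fun h : ℝ => ∫ x in Set.Ioi (-h), f x) 0)
        + (-1 : ℂ) ^ (k - 1) * ∫ x in Set.Ioi (0:ℝ), Q k x * iteratedDeriv k f x := by
  obtain ⟨b, hb⟩ := hsupp.exists_natCast_iteratedDeriv_eq_zero
  have hseries : ∑' n : ℕ, lam ^ (n + 1) * f ((n : ℝ) + 1)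
      = ∑ n ∈ Finset.range b, lam ^ (n + 1) * f ((n : ℝ) + 1) :=
    tsum_eq_sum fun n hn => by
      rw [Finset.mem_range, not_lt] at hn
      rw [← iteratedDeriv_zero (f := f), hb 0 _ (by exact_mod_cast hn.trans n.le_succ), mul_zero]
  have hremainder : ∫ x in Ioi (0 : ℝ), Q k x * iteratedDeriv k f x
      = ∫ x in (0 : ℝ)..b, Q k x * iteratedDeriv k f x := by
    rw [intervalIntegral.integral_of_le b.cast_nonneg,
      ← setIntegral_eq_of_subset_of_forall_sdiff_eq_zero measurableSet_Ioi Ioc_subset_Ioi_self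
        fun x hx => ?_]
    rw [hb k x (not_le.1 fun h => hx.2 ⟨hx.1, h⟩).le, mul_zero]
  have hcoeff (m : ℕ) (hm : m ∈ Finset.Icc 1 k) :
      iteratedDeriv m (fun h : ℝ => ∫ x in Set.Ioi (-h), f x) 0
        = (-1 : ℂ) ^ (m - 1) * iteratedDeriv (m - 1) f 0 := by
    obtain ⟨j, rfl⟩ := Nat.exists_eq_add_of_le' (Finset.mem_Icc.1 hm).1
    rw [iteratedDeriv_succ_integral_Ioi_neg (hf.continuous.integrable_of_hasCompactSupport hsupp)
      hf.continuous, neg_zero, Complex.real_smul]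
    simp
  rw [hseries, hremainder, Finset.sum_congr rfl fun m hm => congrArg (_ * ·) (hcoeff m hm)]
  exact twisted_EM_interval_with_remainder hne hQ1 hQcont hQderiv b (fun m => hb m b le_rfl) hk hf

/-- Twisted Euler–Maclaurin formula with remainder for a ray. Here `λ ≠ 1` is a root
of unity of order `N`, and `Q m` (for `m ≥ 1`) are the `N`-periodic successive
antiderivatives (with mean zero over a period) of `-Σ_n λⁿ δ(x-n)`, starting from
`Q_{1,λ}(x) = (λ/(1-λ))λ^⌊x⌋`.  With
`M^{k,λ}(S) = (1/2 + λ/(1-λ))S + Q_{2,λ}(0)S² + ⋯ + Q_{k,λ}(0)S^k`, for `f ∈ C_c^k(ℝ)`: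
`(1/2)f(0) + Σ_{n≥1} λⁿ f(n) = [M^{k,λ}(∂/∂h) ∫_{-h}^∞ f]|_{h=0}
  + (-1)^{k-1} ∫₀^∞ Q_{k,λ}(x) f^{(k)}(x) dx`. -/
theorem twisted_EM_ray_with_remainder
    (N : ℕ) (hN : 0 < N) (lam : ℂ) (hroot : lam ^ N = 1) (hne : lam ≠ 1)
    (k : ℕ) (hk : 1 ≤ k) (Q : ℕ → ℝ → ℂ)
    (hQ1 : ∀ x : ℝ, Q 1 x = (lam / (1 - lam)) * lam ^ (⌊x⌋ : ℤ))
    (hQper : ∀ m, 1 ≤ m → Function.Periodic (Q m) (N : ℝ))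
    (hQcont : ∀ m, 2 ≤ m → Continuous (Q m))
    (hQderiv : ∀ m, 2 ≤ m → ∀ x : ℝ, Int.fract x ≠ 0 → HasDerivAt (Q m) (Q (m - 1) x) x)
    (hQint : ∀ m, 2 ≤ m → (∫ x in (0:ℝ)..(N : ℝ), Q m x) = 0)
    (f : ℝ → ℂ) (hf : ContDiff ℝ k f) (hsupp : HasCompactSupport f) :
    (1/2) * f 0 + (∑' n : ℕ, lam ^ (n + 1) * f ((n : ℝ) + 1))
      = (∑ m ∈ Finset.Icc 1 k,
          (if m = 1 then 1/2 + lam / (1 - lam) else Q m 0) *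
            iteratedDeriv m (fun h : ℝ => ∫ x in Set.Ioi (-h), f x) 0)
        + (-1 : ℂ) ^ (k - 1) * ∫ x in Set.Ioi (0:ℝ), Q k x * iteratedDeriv k f x :=
  twisted_EM_ray_with_remainder_general lam hne k hk Q hQ1 hQcont hQderiv f hf hsupp
end

section
/- Let u₁,...,uₙ be a basis of ℝⁿ* of primitive dual-lattice vectors, α₁,...,αₙ the dual basis, Γ = (ℤⁿ)*/Σℤuᵢ, v ∈ ℤⁿ, and C = v + Σⱼ ℝ_{≥0}αⱼ the corresponding simple integral orthant. Then for any compactly supported function f on ℝⁿ, the weighted lattice sum over C satisfies Σ'_{C∩ℤⁿ} f = (1/|Γ|) Σ_{γ∈Γ} Σ'_x e^{2πi⟨γ,x⟩} f(x), where the inner weighted sum runs over all x = v + m₁α₁ + ... + mₙαₙ with mᵢ nonnegative integers. -/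
open scoped BigOperators
attribute [local instance] Classical.propDecidable

/-!
Write `x(m) = v + Σⱼ mⱼ αⱼ` for `m ∈ ℕⁿ`. Since `⟨uⱼ, x(m) − v⟩ = mⱼ`, the map `m ↦ x(m)` is a
bijection from `ℕⁿ` onto the orthant `C` carrying the weight `2^{-#{j : mⱼ = 0}}` to the face weight
of `x(m)`, and its lattice points are exactly the `x(m) ∈ ℤⁿ`. As `⟨uᵢ, x(m)⟩ ∈ ℤ`, the character
`γ ↦ e^{2πi⟨γ, x(m)⟩}` of `ℤⁿ` is trivial on `Σ ℤuᵢ`, so it is a character of `Γ`; its average over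
`Γ` is `1` if it is trivial, i.e. if `x(m) ∈ ℤⁿ`, and `0` otherwise. Compact support of `f` makes
the sums over `m` finite, so the average may be taken inside them.
-/

open Complex Function Set Topology

theorem AddChar.map_eq_one_of_mem_closure {A M : Type*} [AddGroup A] [Monoid M]
    (ψ : AddChar A M) {s : Set A} (hs : ∀ a ∈ s, ψ a = 1) :
    ∀ a ∈ AddSubgroup.closure s, ψ a = 1 := by
  intro a ha
  induction ha using AddSubgroup.closure_induction with
  | mem a ha => exact hs a ha
  | zero => exact ψ.map_zero_eq_one
  | add a b _ _ ha hb => rw [ψ.map_add_eq_mul, ha, hb, one_mul]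
  | neg a _ ha =>
    calc ψ (-a) = ψ (-a) * ψ a := by rw [ha, mul_one]
      _ = 1 := by rw [← ψ.map_add_eq_mul, neg_add_cancel, ψ.map_zero_eq_one]

/-- Orthogonality of characters of `G ⧸ L`, with the quotient given by a transversal `T`. -/
theorem AddChar.sum_transversal_eq_ite {G R : Type*} [AddCommGroup G] [CommRing R] [IsDomain R]
    {L : AddSubgroup G} {T : Finset G} (hT : ∀ g, ∃! t, t ∈ T ∧ g - t ∈ L)
    (ψ : AddChar G R) (hψ : ∀ l ∈ L, ψ l = 1) :
    ∑ t ∈ T, ψ t = if ψ = 1 then (T.card : R) else 0 := by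
  split_ifs with h
  · simp [h]
  obtain ⟨g, hg⟩ := AddChar.ne_one_iff.1 h
  choose r hr using fun x => (hT x).exists
  have hr_eq : ∀ x, ψ (r x) = ψ x := fun x => by
    rw [← mul_one (ψ (r x)), ← hψ _ (hr x).2, ← ψ.map_add_eq_mul, add_sub_cancel]
  have hr_unique : ∀ x t, t ∈ T → x - t ∈ L → r x = t := fun x t ht hxt =>
    (hT x).unique (hr x) ⟨ht, hxt⟩
  -- translation by `g` permutes the cosets of `L`, so `t ↦ r (g + t)` permutes `T`
  have hshift : ∑ t ∈ T, ψ (g + t) = ∑ t ∈ T, ψ t :=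
    Finset.sum_nbij' (fun t => r (g + t)) (fun t => r (t - g)) (fun t _ => (hr _).1)
      (fun t _ => (hr _).1)
      (fun t ht => hr_unique _ t ht (by convert L.neg_mem (hr (g + t)).2 using 1; abel))
      (fun t ht => hr_unique _ t ht (by convert L.neg_mem (hr (t - g)).2 using 1; abel))
      (fun t _ => (hr_eq _).symm)
  have hfix : (ψ g - 1) * ∑ t ∈ T, ψ t = 0 := by
    rw [sub_mul, one_mul, Finset.mul_sum, sub_eq_zero]
    simpa only [← ψ.map_add_eq_mul] using hshift
  exact (mul_eq_zero.1 hfix).resolve_left (sub_ne_zero.2 hg)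

def integerLattice (ι : Type*) : Set (ι → ℝ) := range fun (x : ι → ℤ) k => (x k : ℝ)

section PairingChar

variable {ι : Type*} [Fintype ι]

noncomputable def pairingChar (p : ι → ℝ) : AddChar (ι → ℤ) ℂ where
  toFun γ := exp (2 * (Real.pi : ℂ) * I * ((∑ k, (γ k : ℝ) * p k : ℝ) : ℂ))
  map_zero_eq_one' := by simp
  map_add_eq_mul' γ δ := by
    simp only [Pi.add_apply, Int.cast_add, add_mul, Finset.sum_add_distrib, ofReal_add, mul_add,
      exp_add]

theorem pairingChar_apply (p : ι → ℝ) (γ : ι → ℤ) :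
    pairingChar p γ = exp (2 * (Real.pi : ℂ) * I * ((∑ k, (γ k : ℝ) * p k : ℝ) : ℂ)) := rfl

theorem pairingChar_apply_eq_one_iff (p : ι → ℝ) (γ : ι → ℤ) :
    pairingChar p γ = 1 ↔ ∃ z : ℤ, ∑ k, (γ k : ℝ) * p k = z := by
  have h2πi : 2 * (Real.pi : ℂ) * I ≠ 0 := by simp [Real.pi_ne_zero, I_ne_zero]
  rw [pairingChar_apply, exp_eq_one_iff]
  refine exists_congr fun z => ⟨fun h => ?_, fun h => by rw [h]; push_cast; ring⟩
  exact_mod_cast mul_left_cancel₀ h2πi (h.trans (mul_comm _ _))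

theorem pairingChar_eq_one_iff (p : ι → ℝ) : pairingChar p = 1 ↔ p ∈ integerLattice ι := by
  constructor
  · intro h
    have hcoord : ∀ k, ∃ z : ℤ, p k = z := fun k => by
      simpa [Pi.single_apply] using (pairingChar_apply_eq_one_iff p (Pi.single k 1)).1
        (by rw [h, AddChar.one_apply])
    choose x hx using hcoord
    exact ⟨x, funext fun k => (hx k).symm⟩
  · rintro ⟨x, rfl⟩
    ext γ
    rw [AddChar.one_apply, pairingChar_apply_eq_one_iff]
    exact ⟨∑ k, γ k * x k, by push_cast; rfl⟩

end PairingChar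

theorem mem_closure_range_iff_exists_int_combination {n : ℕ} (u : Fin n → Fin n → ℤ)
    (γ γ₀ : Fin n → ℤ) :
    γ - γ₀ ∈ AddSubgroup.closure (range u) ↔
      ∃ c : Fin n → ℤ, ∀ k, γ k = γ₀ k + ∑ i, c i * u i k := by
  rw [AddSubgroup.mem_closure_range_iff_of_fintype]
  refine exists_congr fun c => ?_
  simp only [sub_eq_iff_eq_add', funext_iff, Pi.add_apply, Finset.sum_apply, Pi.smul_apply,
    smul_eq_mul]

section Orthant

variable {n : ℕ} (u : Fin n → Fin n → ℤ) (α : Fin n → Fin n → ℝ) (v : Fin n → ℤ)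

def orthantPoint (t : Fin n → ℝ) : Fin n → ℝ := fun k => v k + ∑ j, t j * α j k

def orthantCoord (y : Fin n → ℝ) : Fin n → ℝ := fun j => ∑ k, u j k * (y k - v k)

noncomputable def orthantWeight (t : Fin n → ℝ) : ℂ :=
  if ∀ j, 0 ≤ t j then ((1 : ℂ) / 2) ^ (Finset.univ.filter fun j => t j = 0).card else 0

theorem orthantWeight_natCast (m : Fin n → ℕ) :
    orthantWeight (fun j => (m j : ℝ)) =
      ((1 : ℂ) / 2) ^ (Finset.univ.filter fun j => m j = 0).card := by
  rw [orthantWeight, if_pos fun j => Nat.cast_nonneg _]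
  congr 2
  exact Finset.filter_congr fun j _ => Nat.cast_eq_zero

variable {u α}
variable (hdual : ∀ i j, (∑ k, (u i k : ℝ) * α j k) = if i = j then 1 else 0)
include hdual

theorem orthantCoord_orthantPoint (t : Fin n → ℝ) : orthantCoord u v (orthantPoint α v t) = t := by
  funext j
  calc ∑ k, (u j k : ℝ) * (v k + ∑ i, t i * α i k - v k)
      = ∑ i, t i * ∑ k, (u j k : ℝ) * α i k := by
        simp only [add_sub_cancel_left, Finset.mul_sum]
        rw [Finset.sum_comm]
        exact Finset.sum_congr rfl fun _ _ => Finset.sum_congr rfl fun _ _ => by ring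
    _ = t j := by simp [hdual]

theorem orthantPoint_orthantCoord (y : Fin n → ℝ) : orthantPoint α v (orthantCoord u v y) = y := by
  set U : Matrix (Fin n) (Fin n) ℝ := .of fun i k => u i k
  set A : Matrix (Fin n) (Fin n) ℝ := .of fun k j => α j k
  have hUA : U * A = 1 := by
    ext i j
    simpa [U, A, Matrix.mul_apply, Matrix.one_apply] using hdual i j
  have hAU := congrArg (fun M => M.mulVec (y - Int.cast ∘ v)) (mul_eq_one_comm.1 hUA)
  simp only [← Matrix.mulVec_mulVec, Matrix.one_mulVec] at hAU
  funext k
  have := congrFun hAU k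
  simp only [Matrix.mulVec, dotProduct, U, A, Matrix.of_apply, Pi.sub_apply, comp_apply] at this
  simp only [orthantPoint, orthantCoord]
  rw [Finset.sum_congr rfl fun j _ => mul_comm _ _, this]
  ring

theorem orthantPoint_natCast_injective :
    Injective fun m : Fin n → ℕ => orthantPoint α v fun j => (m j : ℝ) := by
  intro m m' h
  have := congrArg (orthantCoord u v) h
  simp only [orthantCoord_orthantPoint v hdual] at this
  exact funext fun j => by exact_mod_cast congrFun this j

theorem mem_range_orthantPoint_of_int (x : Fin n → ℤ)
    (hx : ∀ j, 0 ≤ orthantCoord u v (fun k => (x k : ℝ)) j) :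
    (fun k => (x k : ℝ)) ∈ range fun m : Fin n → ℕ => orthantPoint α v fun j => (m j : ℝ) := by
  have hcoord : ∀ j,
      orthantCoord u v (fun k => (x k : ℝ)) j = ((∑ k, u j k * (x k - v k) : ℤ) : ℝ) :=
    fun j => by simp [orthantCoord]
  refine ⟨fun j => (∑ k, u j k * (x k - v k)).toNat, ?_⟩
  have hm : (fun j => ((∑ k, u j k * (x k - v k)).toNat : ℝ)) =
      orthantCoord u v (fun k => (x k : ℝ)) := by
    funext j
    have hj := hx j
    rw [hcoord] at hj ⊢
    exact_mod_cast Int.toNat_of_nonneg (by exact_mod_cast hj)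
  simp only [hm, orthantPoint_orthantCoord v hdual]

theorem support_indicator_subset_range_orthantPoint (f : (Fin n → ℝ) → ℂ) :
    support ((integerLattice (Fin n)).indicator fun y =>
        orthantWeight (orthantCoord u v y) * f y) ⊆
      range fun m : Fin n → ℕ => orthantPoint α v fun j => (m j : ℝ) := by
  intro y hy
  obtain ⟨⟨x, rfl⟩, hy⟩ := indicator_apply_ne_zero.1 hy
  refine mem_range_orthantPoint_of_int v hdual x fun j => ?_
  by_contra hneg
  have hzero : orthantWeight (orthantCoord u v fun k => (x k : ℝ)) = 0 :=
    if_neg fun h => hneg (h j)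
  exact hy (by simp only [hzero, zero_mul])

theorem finite_support_comp_orthantPoint {β : Type*} [Zero β] {f : (Fin n → ℝ) → β}
    (hf : HasCompactSupport f) :
    (support fun m : Fin n → ℕ => f (orthantPoint α v fun j => (m j : ℝ))).Finite := by
  have hembed : IsClosedEmbedding (orthantPoint α v) :=
    LeftInverse.isClosedEmbedding (f := orthantCoord u v) (orthantCoord_orthantPoint v hdual)
      (by unfold orthantCoord; fun_prop) (by unfold orthantPoint; fun_prop)
  have hcast : IsClosedEmbedding fun (m : Fin n → ℕ) j => (m j : ℝ) :=
    IsClosedEmbedding.piMap fun _ => Nat.isClosedEmbedding_coe_real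
  exact (hf.comp_isClosedEmbedding (hembed.comp hcast)).isCompact.finite_of_discrete.subset
    (subset_tsupport _)

theorem average_pairingChar_orthantPoint
    {T : Finset (Fin n → ℤ)} (hT : ∀ g, ∃! t, t ∈ T ∧ g - t ∈ AddSubgroup.closure (range u))
    (m : Fin n → ℕ) :
    (1 / (T.card : ℂ)) * ∑ γ ∈ T, pairingChar (orthantPoint α v fun j => (m j : ℝ)) γ =
      if (orthantPoint α v fun j => (m j : ℝ)) ∈ integerLattice (Fin n) then 1 else 0 := by
  have hcard : (T.card : ℂ) ≠ 0 :=
    Nat.cast_ne_zero.2 (Finset.card_ne_zero_of_mem (hT 0).exists.choose_spec.1)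
  -- `⟨uᵢ, v + Σⱼ mⱼαⱼ⟩ = ⟨uᵢ, v⟩ + mᵢ` is an integer
  have hrows : ∀ i, pairingChar (orthantPoint α v fun j => (m j : ℝ)) (u i) = 1 := fun i => by
    have hi := congrFun (orthantCoord_orthantPoint v hdual fun j => (m j : ℝ)) i
    simp only [orthantCoord, mul_sub, Finset.sum_sub_distrib] at hi
    rw [pairingChar_apply_eq_one_iff]
    exact ⟨∑ k, u i k * v k + m i, by push_cast; linarith⟩
  rw [AddChar.sum_transversal_eq_ite hT _ (AddChar.map_eq_one_of_mem_closure _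
    (by rintro _ ⟨i, rfl⟩; exact hrows i))]
  simp only [pairingChar_eq_one_iff]
  split_ifs
  · exact one_div_mul_cancel hcard
  · exact mul_zero _

end Orthant

theorem weighted_orthant_sum_eq_character_average_general
    (n : ℕ) (u : Fin n → Fin n → ℤ)
    (α : Fin n → Fin n → ℝ)
    (hdual : ∀ i j, (∑ k, (u i k : ℝ) * α j k) = if i = j then 1 else 0)
    (v : Fin n → ℤ)
    (T : Finset (Fin n → ℤ))
    (hT : ∀ γ : Fin n → ℤ, ∃! γ₀, γ₀ ∈ T ∧ ∃ c : Fin n → ℤ, ∀ k, γ k = γ₀ k + ∑ i, c i * u i k)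
    (f : (Fin n → ℝ) → ℂ) (hf : HasCompactSupport f) :
    (∑' x : Fin n → ℤ,
        (if ∀ j, 0 ≤ ∑ k, (u j k : ℝ) * ((x k : ℝ) - (v k : ℝ))
          then ((1:ℂ)/2) ^ (Finset.univ.filter
              (fun j : Fin n => (∑ k, (u j k : ℝ) * ((x k : ℝ) - (v k : ℝ))) = 0)).card
          else 0) * f (fun k => (x k : ℝ)))
      = (1 / (T.card : ℂ)) * ∑ γ ∈ T, ∑' m : Fin n → ℕ,
          ((1:ℂ)/2) ^ (Finset.univ.filter (fun j : Fin n => m j = 0)).card *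
          Complex.exp (2 * (Real.pi : ℂ) * Complex.I *
            ((∑ k, (γ k : ℝ) * ((v k : ℝ) + ∑ j, (m j : ℝ) * α j k) : ℝ) : ℂ)) *
          f (fun k => (v k : ℝ) + ∑ j, (m j : ℝ) * α j k) := by
  set P : (Fin n → ℕ) → Fin n → ℝ := fun m => orthantPoint α v fun j => (m j : ℝ)
  set Φ : (Fin n → ℝ) → ℂ := fun y => orthantWeight (orthantCoord u v y) * f y
  have hT' : ∀ g, ∃! t, t ∈ T ∧ g - t ∈ AddSubgroup.closure (range u) := by
    simpa only [mem_closure_range_iff_exists_int_combination] using hT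
  have hsummable : ∀ γ ∈ T, Summable fun m => pairingChar (P m) γ * Φ (P m) := fun γ _ =>
    summable_of_hasFiniteSupport ((finite_support_comp_orthantPoint v hdual
      (hf.mul_left : HasCompactSupport Φ)).subset (support_mul_subset_right _ _))
  calc _ = ∑' x : Fin n → ℤ, Φ fun k => (x k : ℝ) := rfl
    _ = ∑' y, (integerLattice (Fin n)).indicator Φ y := by
      rw [← tsum_subtype, integerLattice, tsum_range Φ]
      exact fun x y h => funext fun k => by exact_mod_cast congrFun h k
    _ = ∑' m, (integerLattice (Fin n)).indicator Φ (P m) :=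
      ((orthantPoint_natCast_injective v hdual).tsum_eq
        (support_indicator_subset_range_orthantPoint v hdual f)).symm
    _ = ∑' m, (1 / (T.card : ℂ)) * ∑ γ ∈ T, pairingChar (P m) γ * Φ (P m) := by
      refine tsum_congr fun m => ?_
      rw [← Finset.sum_mul, ← mul_assoc, average_pairingChar_orthantPoint v hdual hT' m,
        indicator_apply, ite_mul, one_mul, zero_mul]
    _ = _ := by
      rw [tsum_mul_left, Summable.tsum_finsetSum hsummable]
      congr 1
      refine Finset.sum_congr rfl fun γ _ => tsum_congr fun m => ?_
      simp only [Φ, P, orthantCoord_orthantPoint v hdual, orthantWeight_natCast, pairingChar_apply]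
      unfold orthantPoint
      ring

/-- Averaging over the finite group `Γ = (ℤⁿ)*/Σℤuᵢ` for a simple integral orthant
`C = v + Σⱼ ℝ_{≥0} αⱼ` (with `u₁,…,uₙ` primitive dual-lattice vectors forming a basis
of `ℝⁿ*`, `α` the dual basis, and `v ∈ ℤⁿ`): for any compactly supported `f`,
`Σ'_{C∩ℤⁿ} f = (1/|Γ|) Σ_{γ∈Γ} Σ'_x e^{2πi⟨γ,x⟩} f(x)`, the inner weighted sum
running over `x = v + m₁α₁ + ⋯ + mₙαₙ`, `mᵢ ∈ ℤ_{≥0}`.  The group `Γ` is encoded by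
a complete set `T` of coset representatives of `Σℤuᵢ` in `(ℤⁿ)* = ℤⁿ`. -/
theorem weighted_orthant_sum_eq_character_average
    (n : ℕ) (u : Fin n → Fin n → ℤ)
    (hprim : ∀ i, Finset.univ.gcd (u i) = 1)
    (hbasis : LinearIndependent ℝ (fun i => fun k => ((u i k : ℝ))))
    (α : Fin n → Fin n → ℝ)
    (hdual : ∀ i j, (∑ k, (u i k : ℝ) * α j k) = if i = j then 1 else 0)
    (v : Fin n → ℤ)
    (T : Finset (Fin n → ℤ))
    (hT : ∀ γ : Fin n → ℤ, ∃! γ₀, γ₀ ∈ T ∧ ∃ c : Fin n → ℤ, ∀ k, γ k = γ₀ k + ∑ i, c i * u i k)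
    (f : (Fin n → ℝ) → ℂ) (hf : HasCompactSupport f) :
    (∑' x : Fin n → ℤ,
        (if ∀ j, 0 ≤ ∑ k, (u j k : ℝ) * ((x k : ℝ) - (v k : ℝ))
          then ((1:ℂ)/2) ^ (Finset.univ.filter
              (fun j : Fin n => (∑ k, (u j k : ℝ) * ((x k : ℝ) - (v k : ℝ))) = 0)).card
          else 0) * f (fun k => (x k : ℝ)))
      = (1 / (T.card : ℂ)) * ∑ γ ∈ T, ∑' m : Fin n → ℕ,
          ((1:ℂ)/2) ^ (Finset.univ.filter (fun j : Fin n => m j = 0)).card *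
          Complex.exp (2 * (Real.pi : ℂ) * Complex.I *
            ((∑ k, (γ k : ℝ) * ((v k : ℝ) + ∑ j, (m j : ℝ) * α j k) : ℝ) : ℂ)) *
          f (fun k => (v k : ℝ) + ∑ j, (m j : ℝ) * α j k) :=
  weighted_orthant_sum_eq_character_average_general n u α hdual v T hT f hf
end

section
/- Let Δ be a simple integral polytope, F a face, v ∈ F a vertex, and γ ∈ Γ_F ⊆ Γ_v. Define λ_{γ,j,v} = e^{2πi⟨γ,α_{j,v}⟩} for j ∈ I_v, where α_{j,v} is the basis dual to {uᵢ : i ∈ I_v}. Then: (a) for j ∈ I_F, λ_{γ,j,v} is independent of the choice of vertex v ∈ F; (b) for j ∈ I_v ∖ I_F, λ_{γ,j,v} = 1; and (c) if moreover γ ∈ Γ_F^♭ := Γ_F ∖ ∪_{E ⊋ F} Γ_E (union over faces E strictly containing F), then λ_{γ,j,F} ≠ 1 for all j ∈ I_F. -/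
/-!
Write `γ = ∑_{i ∈ I_F} lᵢ uᵢ` with real coefficients. Pairing with the basis dual to
`{uᵢ : i ∈ I_v}` reads off `⟨γ, α_{j,v}⟩ = l_j` for `j ∈ I_F` and `0` for `j ∈ I_v ∖ I_F`,
whatever the vertex `v ∈ F`; this gives (a) and (b). If `λ_{γ,j} = 1` then `l_j = m ∈ ℤ`, and
`γ - m u_j` is an integral representative of `γ` modulo `V_F` lying in
`span{uᵢ : i ∈ I_F ∖ {j}}`, so `γ ∉ Γ_F^♭`.
-/

open Matrix

theorem sum_smul_dotProduct_eq_of_dual {ι κ R : Type*} [Semiring R] [Fintype κ]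
    [DecidableEq ι] {u β : ι → κ → R} {s t : Finset ι} (hst : s ⊆ t)
    (hβ : ∀ i ∈ t, ∀ j ∈ t, u i ⬝ᵥ β j = if i = j then 1 else 0) (l : ι → R)
    {j : ι} (hj : j ∈ t) :
    (∑ i ∈ s, l i • u i) ⬝ᵥ β j = if j ∈ s then l j else 0 := by
  rw [sum_dotProduct]
  calc ∑ i ∈ s, l i • u i ⬝ᵥ β j
      = ∑ i ∈ s, if i = j then l i else 0 :=
        Finset.sum_congr rfl fun i hi => by rw [smul_dotProduct, hβ i (hst hi) j hj]; simp
    _ = if j ∈ s then l j else 0 := Finset.sum_ite_eq' s j l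

theorem sum_smul_sub_smul_mem_span_erase {ι R M : Type*} [Semiring R] [AddCommGroup M]
    [Module R M] [DecidableEq ι] (v : ι → M) (l : ι → R) {s : Finset ι} {j : ι} (hj : j ∈ s) :
    (∑ i ∈ s, l i • v i) - l j • v j ∈ Submodule.span R (v '' ↑(s.erase j)) := by
  rw [← Finset.sum_erase_add s _ hj, add_sub_cancel_right]
  exact Submodule.sum_mem _ fun i hi =>
    Submodule.smul_mem _ _ (Submodule.subset_span (Set.mem_image_of_mem v hi))

theorem Complex.exp_two_pi_mul_I_mul_ofReal_eq_one_iff {x : ℝ} :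
    exp (2 * Real.pi * I * x) = 1 ↔ ∃ m : ℤ, x = m := by
  have h2πI : 2 * (Real.pi : ℂ) * I ≠ 0 := by simp [Real.pi_ne_zero, I_ne_zero]
  simp_rw [exp_eq_one_iff, mul_comm _ (2 * (Real.pi : ℂ) * I), mul_right_inj' h2πI]
  exact exists_congr fun m => by exact_mod_cast Iff.rfl

theorem lambda_gamma_properties_general
    (n d : ℕ) (u : Fin d → Fin n → ℤ)
    (IF Iv Iv' : Finset (Fin d)) (h1 : IF ⊆ Iv) (h2 : IF ⊆ Iv')
    (α α' : Fin d → Fin n → ℝ)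
    (hα : ∀ i ∈ Iv, ∀ j ∈ Iv, (∑ k, (u i k : ℝ) * α j k) = if i = j then 1 else 0)
    (hα' : ∀ i ∈ Iv', ∀ j ∈ Iv', (∑ k, (u i k : ℝ) * α' j k) = if i = j then 1 else 0)
    (γ : Fin n → ℤ)
    (hγ : (fun k => ((γ k : ℝ))) ∈
        Submodule.span ℝ ((fun i : Fin d => fun k => ((u i k : ℝ))) '' (IF : Set (Fin d)))) :
    (∀ j ∈ IF,
      Complex.exp (2 * (Real.pi : ℂ) * Complex.I * ((∑ k, (γ k : ℝ) * α j k : ℝ) : ℂ))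
        = Complex.exp (2 * (Real.pi : ℂ) * Complex.I * ((∑ k, (γ k : ℝ) * α' j k : ℝ) : ℂ))) ∧
    (∀ j ∈ Iv, j ∉ IF →
      Complex.exp (2 * (Real.pi : ℂ) * Complex.I * ((∑ k, (γ k : ℝ) * α j k : ℝ) : ℂ)) = 1) ∧
    ((∀ j ∈ IF, ¬ ∃ (γ'' : Fin n → ℤ) (c : Fin d → ℤ),
        ((fun k => ((γ'' k : ℝ))) ∈
          Submodule.span ℝ
            ((fun i : Fin d => fun k => ((u i k : ℝ))) '' ((IF.erase j : Finset (Fin d)) : Set (Fin d)))) ∧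
        (∀ k, (γ k : ℝ) = (γ'' k : ℝ) + ∑ i ∈ IF, (c i : ℝ) * (u i k : ℝ))) →
      ∀ j ∈ IF,
        Complex.exp (2 * (Real.pi : ℂ) * Complex.I * ((∑ k, (γ k : ℝ) * α j k : ℝ) : ℂ)) ≠ 1) := by
  classical
  set U : Fin d → Fin n → ℝ := fun i k => u i k
  obtain ⟨l, hl⟩ := (Submodule.mem_span_image_finset_iff_exists_fun' ℝ).mp hγ
  have pairing {Iw : Finset (Fin d)} {β : Fin d → Fin n → ℝ} (hsub : IF ⊆ Iw)
      (hβ : ∀ i ∈ Iw, ∀ j ∈ Iw, U i ⬝ᵥ β j = if i = j then 1 else 0) {j : Fin d} (hj : j ∈ Iw) :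
      ∑ k, (γ k : ℝ) * β j k = if j ∈ IF then l j else 0 := by
    rw [← sum_smul_dotProduct_eq_of_dual hsub hβ l hj, hl]
    rfl
  refine ⟨fun j hj => ?_, fun j hj hjF => ?_, fun hflat j hj hone => ?_⟩
  · rw [pairing h1 hα (h1 hj), pairing h2 hα' (h2 hj)]
  · simp [pairing h1 hα hj, hjF]
  · rw [pairing h1 hα (h1 hj), if_pos hj,
      Complex.exp_two_pi_mul_I_mul_ofReal_eq_one_iff] at hone
    obtain ⟨m, hm⟩ := hone
    refine hflat j hj ⟨fun k => γ k - m * u j k, Pi.single j m, ?_, fun k => ?_⟩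
    · have hrep : (fun k => ((γ k - m * u j k : ℤ) : ℝ)) = (∑ i ∈ IF, l i • U i) - l j • U j := by
        ext k
        simp [hl, hm, U]
      exact hrep ▸ sum_smul_sub_smul_mem_span_erase U l hj
    · simp [Pi.single_apply, hj]

/-- Properties of the roots of unity `λ_{γ,j,v} = e^{2πi⟨γ,α_{j,v}⟩}` associated to a
face `F` of a simple integral polytope.  Here `v, v'` are vertices of `F` (so
`I_F ⊆ I_v, I_{v'}`, with `|I_v| = |I_{v'}| = n`), `α_{·,v}` is the basis dual to
`{uᵢ : i ∈ I_v}`, and `γ ∈ Γ_F` is represented by an integral vector lying in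
`N_F = span_ℝ{uᵢ : i ∈ I_F}`.  Then:
(a) for `j ∈ I_F`, `λ_{γ,j,v}` is independent of the vertex `v ∈ F`;
(b) for `j ∈ I_v ∖ I_F`, `λ_{γ,j,v} = 1`;
(c) if `γ ∈ Γ_F^♭` (no representative modulo `V_F` lies in `N_E` for a face
`E ⊋ F`, i.e. in `span_ℝ{uᵢ : i ∈ I_F ∖ {j}}` for some `j ∈ I_F`), then
`λ_{γ,j,F} ≠ 1` for all `j ∈ I_F`. -/
theorem lambda_gamma_properties
    (n d : ℕ) (u : Fin d → Fin n → ℤ)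
    (IF Iv Iv' : Finset (Fin d)) (h1 : IF ⊆ Iv) (h2 : IF ⊆ Iv')
    (hcard : Iv.card = n) (hcard' : Iv'.card = n)
    (α α' : Fin d → Fin n → ℝ)
    (hα : ∀ i ∈ Iv, ∀ j ∈ Iv, (∑ k, (u i k : ℝ) * α j k) = if i = j then 1 else 0)
    (hα' : ∀ i ∈ Iv', ∀ j ∈ Iv', (∑ k, (u i k : ℝ) * α' j k) = if i = j then 1 else 0)
    (γ : Fin n → ℤ)
    (hγ : (fun k => ((γ k : ℝ))) ∈
        Submodule.span ℝ ((fun i : Fin d => fun k => ((u i k : ℝ))) '' (IF : Set (Fin d)))) :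
    (∀ j ∈ IF,
      Complex.exp (2 * (Real.pi : ℂ) * Complex.I * ((∑ k, (γ k : ℝ) * α j k : ℝ) : ℂ))
        = Complex.exp (2 * (Real.pi : ℂ) * Complex.I * ((∑ k, (γ k : ℝ) * α' j k : ℝ) : ℂ))) ∧
    (∀ j ∈ Iv, j ∉ IF →
      Complex.exp (2 * (Real.pi : ℂ) * Complex.I * ((∑ k, (γ k : ℝ) * α j k : ℝ) : ℂ)) = 1) ∧
    ((∀ j ∈ IF, ¬ ∃ (γ'' : Fin n → ℤ) (c : Fin d → ℤ),
        ((fun k => ((γ'' k : ℝ))) ∈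
          Submodule.span ℝ
            ((fun i : Fin d => fun k => ((u i k : ℝ))) '' ((IF.erase j : Finset (Fin d)) : Set (Fin d)))) ∧
        (∀ k, (γ k : ℝ) = (γ'' k : ℝ) + ∑ i ∈ IF, (c i : ℝ) * (u i k : ℝ))) →
      ∀ j ∈ IF,
        Complex.exp (2 * (Real.pi : ℂ) * Complex.I * ((∑ k, (γ k : ℝ) * α j k : ℝ) : ℂ)) ≠ 1) :=
  lambda_gamma_properties_general n d u IF Iv Iv' h1 h2 α α' hα hα' γ hγ
end

section
/- Let Δ be a simple integral polytope with vertices v and associated finite groups Γ_v, Γ_F for faces F, and let Γ_F^♭ = Γ_F ∖ ∪_{E ⊋ F} Γ_E. Then for each vertex v, Γ_v is the disjoint union, over all faces F containing v, of the sets Γ_F^♭ (viewed inside Γ_v via the natural inclusions). -/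
/-!
Since the `uᵢ`, `i ∈ I_v`, form a basis of `ℝⁿ`, write `γ = Σ aᵢ uᵢ`. A representative
`γ - Σ cᵢ uᵢ` (`cᵢ ∈ ℤ`) lies in `N_F` exactly when `cᵢ = aᵢ` for all `i ∈ I_v ∖ I_F`, so
`[γ] ∈ Γ_F` iff `I_F` contains `J₀ = {i ∈ I_v : aᵢ ∉ ℤ}`. Hence `[γ] ∈ Γ_F^♭` for the single
face with `I_F = J₀`.
-/

theorem Module.Basis.sub_sum_mem_span_image_iff {ι R M : Type*} [Ring R] [AddCommGroup M]
    [Module R M] [Fintype ι] (b : Module.Basis ι R M) (x : M) (c : ι → R) (s : Set ι) :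
    x - ∑ i, c i • b i ∈ Submodule.span R (b '' s) ↔ ∀ i ∉ s, b.repr x i = c i := by
  simp only [b.mem_span_image, Finsupp.support_subset_iff, map_sub, Finsupp.coe_sub,
    Pi.sub_apply, b.repr_sum_self, sub_eq_zero]

theorem Finset.existsUnique_minimal_of_iff_superset {α : Type*} {S J₀ : Finset α}
    {P : Finset α → Prop} (hJ₀ : J₀ ⊆ S) (hP : ∀ J ⊆ S, P J ↔ J₀ ⊆ J) :
    ∃! J, J ⊆ S ∧ P J ∧ ∀ J' ⊂ J, ¬ P J' := by
  have hPJ₀ : P J₀ := (hP J₀ hJ₀).2 subset_rfl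
  refine ⟨J₀, ⟨hJ₀, hPJ₀, fun J' hJ' hPJ' => ?_⟩, fun J ⟨hJS, hPJ, hmin⟩ => ?_⟩
  · exact hJ'.not_subset ((hP J' (hJ'.subset.trans hJ₀)).1 hPJ')
  · exact (((hP J hJS).1 hPJ).eq_or_ssubset.resolve_right fun h => hmin J₀ h hPJ₀).symm

/-- `[γ] ∈ Γ_F ⊆ Γ_v` for the face `F ∋ v` with `I_F = J`: some representative of `γ` modulo
`Σ_{i ∈ Iv} ℤ uᵢ` lies in `N_F`. -/
def MemGamma {n d : ℕ} (u : Fin d → Fin n → ℤ) (Iv J : Finset (Fin d)) (γ : Fin n → ℤ) :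
    Prop :=
  ∃ (γ' : Fin n → ℤ) (c : Fin d → ℤ),
    (fun k => (γ' k : ℝ)) ∈ Submodule.span ℝ ((fun i => fun k => (u i k : ℝ)) '' J) ∧
    ∀ k, (γ k : ℝ) = γ' k + ∑ i ∈ Iv, (c i : ℝ) * u i k

section
variable {n d : ℕ} {u : Fin d → Fin n → ℤ} {Iv J : Finset (Fin d)} {γ : Fin n → ℤ}

theorem memGamma_iff_exists_sub_mem_span :
    MemGamma u Iv J γ ↔ ∃ c : Fin d → ℤ,
      (fun k => (γ k : ℝ)) - ∑ i ∈ Iv, (c i : ℝ) • (fun k => (u i k : ℝ)) ∈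
        Submodule.span ℝ ((fun i => fun k => (u i k : ℝ)) '' J) := by
  constructor
  · rintro ⟨γ', c, hspan, heq⟩
    refine ⟨c, ?_⟩
    convert hspan using 1
    funext k
    simp [Finset.sum_apply, heq k]
  · rintro ⟨c, hc⟩
    refine ⟨fun k => γ k - ∑ i ∈ Iv, c i * u i k, c, ?_, fun k => by push_cast; ring⟩
    convert hc using 1
    funext k
    push_cast
    simp [Finset.sum_apply]

theorem memGamma_iff_of_basis (b : Module.Basis Iv ℝ (Fin n → ℝ))
    (hb : ⇑b = fun i : Iv => fun k => (u i k : ℝ)) (hJ : J ⊆ Iv) :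
    MemGamma u Iv J γ ↔
      ∀ i : Iv, b.repr (fun k => (γ k : ℝ)) i ∉ Set.range (Int.cast : ℤ → ℝ) → ↑i ∈ J := by
  have hspan : (fun i => fun k => (u i k : ℝ)) '' J =
      b '' (Subtype.val ⁻¹' (J : Set (Fin d))) := by
    rw [hb, ← Set.image_image (fun i => fun k => (u i k : ℝ)) Subtype.val,
      Set.image_preimage_eq_inter_range, Subtype.range_coe_subtype]
    exact congrArg _ (Set.inter_eq_left.2 (Finset.coe_subset.2 hJ)).symm
  have hsum (c : Fin d → ℤ) : ∑ i ∈ Iv, (c i : ℝ) • (fun k => (u i k : ℝ)) =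
      ∑ i : Iv, (c i : ℝ) • b i := by
    rw [hb, Finset.sum_coe_sort Iv fun i => (c i : ℝ) • (fun k => (u i k : ℝ))]
  simp only [memGamma_iff_exists_sub_mem_span, hspan, hsum, b.sub_sum_mem_span_image_iff,
    Set.mem_preimage]
  constructor
  · rintro ⟨c, hc⟩ i hi
    by_contra hiJ
    exact hi ⟨c i, (hc i hiJ).symm⟩
  · intro h
    have hm (i : Iv) : ∃ m : ℤ, ↑i ∉ J → b.repr (fun k => (γ k : ℝ)) i = m := by
      by_cases hi : b.repr (fun k => (γ k : ℝ)) i ∈ Set.range (Int.cast : ℤ → ℝ)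
      · obtain ⟨m, hm⟩ := hi
        exact ⟨m, fun _ => hm.symm⟩
      · exact ⟨0, fun hiJ => absurd (h i hi) hiJ⟩
    choose m hm using hm
    exact ⟨Function.extend Subtype.val m 0, fun i hi => by
      rw [Subtype.val_injective.extend_apply]; exact hm i hi⟩
end

/-- Partition `Γ_v = ⨆_{F ∋ v} Γ_F^♭` for a vertex `v` of a simple integral polytope.
Since `Δ` is simple, the faces `F` containing `v` correspond to the subsets
`J = I_F ⊆ I_v`; `[γ] ∈ Γ_F ⊆ Γ_v` means that `γ` has a representative modulo
`V_v = Σ_{i∈I_v}ℤuᵢ` lying in `N_F = span_ℝ{uᵢ : i ∈ J}`, and `[γ] ∈ Γ_F^♭` means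
additionally `[γ] ∉ Γ_E` for every face `E ⊋ F` (i.e. every `J' ⊊ J`).  Every class
in `Γ_v` lies in `Γ_F^♭` for exactly one face `F ∋ v`. -/
theorem gamma_v_partition
    (n d : ℕ) (u : Fin d → Fin n → ℤ)
    (Iv : Finset (Fin d)) (hcard : Iv.card = n)
    (hind : LinearIndependent ℝ (fun i : Iv => fun k => ((u i k : ℝ))))
    (γ : Fin n → ℤ) :
    ∃! J : Finset (Fin d), J ⊆ Iv ∧
      (∃ (γ' : Fin n → ℤ) (c : Fin d → ℤ),
        ((fun k => ((γ' k : ℝ))) ∈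
          Submodule.span ℝ ((fun i : Fin d => fun k => ((u i k : ℝ))) '' (J : Set (Fin d)))) ∧
        (∀ k, (γ k : ℝ) = (γ' k : ℝ) + ∑ i ∈ Iv, (c i : ℝ) * (u i k : ℝ))) ∧
      (∀ J' : Finset (Fin d), J' ⊂ J →
        ¬ ∃ (γ' : Fin n → ℤ) (c : Fin d → ℤ),
          ((fun k => ((γ' k : ℝ))) ∈
            Submodule.span ℝ ((fun i : Fin d => fun k => ((u i k : ℝ))) '' (J' : Set (Fin d)))) ∧
          (∀ k, (γ k : ℝ) = (γ' k : ℝ) + ∑ i ∈ Iv, (c i : ℝ) * (u i k : ℝ))) := by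
  classical
  let b := basisOfLinearIndependentOfCardEqFinrank' _ hind (by simp [hcard])
  let J₀ := (Finset.univ.filter fun i : Iv =>
    b.repr (fun k => (γ k : ℝ)) i ∉ Set.range (Int.cast : ℤ → ℝ)).map (Function.Embedding.subtype _)
  refine Finset.existsUnique_minimal_of_iff_superset (P := fun J => MemGamma u Iv J γ)
    (J₀ := J₀) (by simp +contextual [J₀, Finset.subset_iff]) fun J hJ => ?_
  rw [memGamma_iff_of_basis b (coe_basisOfLinearIndependentOfCardEqFinrank' _ _ _) hJ]
  simp [J₀, Finset.subset_iff]
end
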